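/- arXiv:2507.11701 — 10 statements merged into one kernel-verified Lean document; each statement's English description precedes it below -/
import Mathlib

section
/- The number of parking functions on n cars (functions π:[n]→[n] such that the i-th smallest value of π is at most i for all i) is (n+1)^(n-1). -/
/-!
Pollak's circular argument. Read preferences in `ZMod (n + 1)`, i.e. on a circular street with
`n + 1` spots; subtracting a constant `c` from every preference rotates the street. For
`f : Fin n → ZMod (n + 1)` the walk `k ↦ ∑_{s < k} (#f⁻¹(s) - 1)` loses exactly `1` over each period
`n + 1`, so by the cycle lemma exactly one rotation `f - c` keeps it above its starting value for a
whole period, and that is precisely the condition that `f - c` be a (0-indexed) parking function.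
Hence the `(n + 1) ^ n` functions split into orbits of size `n + 1`, each containing exactly one
parking function.
-/

/-- A parking function on `n` cars: `π : [n] → [n]` (cars indexed by `Fin n`,
spots `1,…,n`) such that at least `i` cars prefer one of the first `i` spots. -/
def IsPF (n : ℕ) (π : Fin n → ℕ) : Prop :=
  (∀ j, π j ∈ Finset.Icc 1 n) ∧
  ∀ i ∈ Finset.Icc 1 n, i ≤ (Finset.univ.filter (fun j => π j ≤ i)).card

open Finset

-- The cycle lemma of Dvoretzky and Motzkin.
theorem cycle_lemma {m : ℕ} (hm : 0 < m) (B : ℕ → ℤ) (hB : ∀ k, B (k + m) = B k - 1) :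
    ∃! p, p < m ∧ ∀ t < m, B p ≤ B (p + t) := by
  -- two good starting points `q < q'` would give `B q ≤ B q' ≤ B (q + m) = B q - 1`
  have not_lt_of_good : ∀ q q', q' < m → (∀ t < m, B q ≤ B (q + t)) →
      (∀ t < m, B q' ≤ B (q' + t)) → ¬ q < q' := fun q q' hq'm hq hq' hlt => by
    have h1 := hq (q' - q) (by omega)
    have h2 := hq' (q + m - q') (by omega)
    rw [Nat.add_sub_cancel' hlt.le] at h1
    rw [show q' + (q + m - q') = q + m by omega, hB] at h2
    linarith
  have hmin : ∃ p, p < m ∧ ∀ k < m, B p ≤ B k := by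
    obtain ⟨p, hp, hpmin⟩ := (range m).exists_min_image B ⟨0, mem_range.2 hm⟩
    exact ⟨p, mem_range.1 hp, fun k hk => hpmin k (mem_range.2 hk)⟩
  obtain ⟨hpm, hpmin⟩ := Nat.find_spec hmin
  set p := Nat.find hmin
  have hbefore : ∀ q < p, B p < B q := fun q hq => by
    have hq_not_min := Nat.find_min hmin hq
    push Not at hq_not_min
    obtain ⟨k, hk, hkq⟩ := hq_not_min (by omega)
    linarith [hpmin k hk]
  have hp : ∀ t < m, B p ≤ B (p + t) := fun t ht => by
    rcases lt_or_ge (p + t) m with h | h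
    · exact hpmin _ h
    · rw [show p + t = (p + t - m) + m by omega, hB]
      linarith [hbefore (p + t - m) (by omega)]
  exact ⟨p, ⟨hpm, hp⟩, fun q ⟨hqm, hq⟩ =>
    le_antisymm (not_lt.1 (not_lt_of_good p q hqm hp hq))
      (not_lt.1 (not_lt_of_good q p hpm hq hp))⟩

section

variable {n m : ℕ}

theorem card_val_lt_eq_sum [NeZero m] (f : Fin n → ZMod m) {t : ℕ} (ht : t ≤ m) :
    #{j | (f j).val < t} = ∑ s ∈ range t, #{j | f j = s} := by
  rw [card_eq_sum_card_fiberwise (f := fun j => (f j).val) (t := range t)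
    fun j hj => mem_range.2 (mem_filter.1 hj).2]
  refine sum_congr rfl fun s hs => ?_
  have hsm : s < m := (mem_range.1 hs).trans_le ht
  congr 1
  ext j
  simp only [mem_filter, mem_univ, true_and]
  constructor
  · rintro ⟨-, h⟩
    rw [← h, ZMod.natCast_zmod_val]
  · rintro h
    rw [h, ZMod.val_cast_of_lt hsm]
    exact ⟨mem_range.1 hs, rfl⟩

def excess (f : Fin n → ZMod m) (k : ℕ) : ℤ :=
  ∑ s ∈ range k, ((#{j | f j = s} : ℤ) - 1)

theorem excess_add [NeZero m] (f : Fin n → ZMod m) (p : ℕ) {t : ℕ} (ht : t ≤ m) :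
    excess f (p + t) = excess f p + #{j | (f j - p).val < t} - t := by
  have hfiber : ∀ s : ℕ, #{j | f j - p = s} = #{j | f j = (p + s : ℕ)} := fun s => by
    simp only [sub_eq_iff_eq_add, Nat.cast_add, add_comm]
  simp only [excess, sum_range_add, card_val_lt_eq_sum _ ht, hfiber, sum_sub_distrib,
    Nat.cast_sum, sum_const, card_range, nsmul_eq_mul, mul_one]
  push_cast
  ring

theorem excess_add_period [NeZero m] (f : Fin n → ZMod m) (k : ℕ) :
    excess f (k + m) = excess f k + n - m := by
  rw [excess_add f k le_rfl, filter_true_of_mem fun j _ => ZMod.val_lt _, card_univ,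
    Fintype.card_fin]

end

-- A parking function with spots relabelled `0, …, n - 1`, on a street of `n + 1` spots.
def IsParking {n : ℕ} (f : Fin n → ZMod (n + 1)) : Prop :=
  ∀ t ≤ n, t ≤ #{j | (f j).val < t}

section

variable {n : ℕ}

theorem isParking_sub_iff (f : Fin n → ZMod (n + 1)) (p : ℕ) :
    IsParking (fun j => f j - p) ↔ ∀ t < n + 1, excess f p ≤ excess f (p + t) := by
  refine forall_congr' fun t => ?_
  rw [← Nat.lt_succ_iff]
  refine imp_congr_right fun ht => ?_
  rw [excess_add f p ht.le]
  simp only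
  omega

theorem existsUnique_isParking_sub (f : Fin n → ZMod (n + 1)) :
    ∃! c : ZMod (n + 1), IsParking (fun j => f j - c) := by
  obtain ⟨p, ⟨-, hp⟩, hp_unique⟩ := cycle_lemma n.succ_pos (excess f) fun k => by
    rw [excess_add_period]; push_cast; ring
  refine ⟨p, (isParking_sub_iff f p).2 hp, fun c hc => ?_⟩
  rw [← ZMod.natCast_zmod_val c] at hc ⊢
  rw [hp_unique c.val ⟨c.val_lt, (isParking_sub_iff f c.val).1 hc⟩]

theorem card_isParking_mul :
    Nat.card {f : Fin n → ZMod (n + 1) // IsParking f} * (n + 1) = (n + 1) ^ n := by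
  choose c hc hc_unique using existsUnique_isParking_sub (n := n)
  let e : (Fin n → ZMod (n + 1)) ≃ {f // IsParking f} × ZMod (n + 1) :=
    { toFun := fun f => (⟨fun j => f j - c f, hc f⟩, c f)
      invFun := fun fc => fun j => fc.1.1 j + fc.2
      left_inv := fun f => by simp
      right_inv := fun ⟨⟨f, hf⟩, d⟩ => by
        have : c (fun j => f j + d) = d := (hc_unique _ d (by simpa using hf)).symm
        simp [this] }
  simpa using (Nat.card_congr e).symm

theorem IsParking.val_lt {f : Fin n → ZMod (n + 1)} (hf : IsParking f) (j : Fin n) :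
    (f j).val < n :=
  card_filter_eq_iff.1 (le_antisymm (card_filter_le _ _) (by simpa using hf n le_rfl)) j
    (mem_univ j)

theorem setOf_isPF_eq_image :
    {π | IsPF n π} = (fun f j => (f j).val + 1) '' {f : Fin n → ZMod (n + 1) | IsParking f} := by
  ext π
  constructor
  · rintro ⟨hrange, hcount⟩
    have hval (j : Fin n) : ((π j - 1 : ℕ) : ZMod (n + 1)).val = π j - 1 :=
      ZMod.val_cast_of_lt (by have := mem_Icc.1 (hrange j); omega)
    refine ⟨fun j => ((π j - 1 : ℕ) : ZMod (n + 1)), fun t ht => ?_, funext fun j => ?_⟩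
    · rcases t.eq_zero_or_pos with rfl | htpos
      · exact Nat.zero_le _
      · convert hcount t (mem_Icc.2 ⟨htpos, ht⟩) using 2
        ext j
        simp only [mem_filter, mem_univ, true_and, hval]
        have := mem_Icc.1 (hrange j)
        omega
    · simp only [hval]
      have := mem_Icc.1 (hrange j)
      omega
  · rintro ⟨f, hf, rfl⟩
    exact ⟨fun j => mem_Icc.2 ⟨Nat.succ_pos _, hf.val_lt j⟩, fun i hi => hf i (mem_Icc.1 hi).2⟩

end

theorem count_parking_functions_general (n : ℕ) :
    {π : Fin n → ℕ | IsPF n π}.ncard = (n + 1) ^ (n - 1) := by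
  have hinj : Function.Injective fun (f : Fin n → ZMod (n + 1)) j => (f j).val + 1 :=
    fun f g h => funext fun j => ZMod.val_injective _ (by simpa using congrFun h j)
  rw [setOf_isPF_eq_image, Set.ncard_image_of_injective _ hinj, ← Nat.card_coe_set_eq]
  apply Nat.eq_of_mul_eq_mul_right n.succ_pos
  rw [Set.coe_ofPred, card_isParking_mul]
  cases n <;> simp [pow_succ]

theorem count_parking_functions (n : ℕ) (hn : 0 < n) :
    {π : Fin n → ℕ | IsPF n π}.ncard = (n + 1) ^ (n - 1) :=
  count_parking_functions_general n
end

section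
/- There is a bijection between prime parking functions on n cars and ([n]\{2})-restricted parking functions on n cars; in particular their counts are equal. -/
/-- A prime parking function on `n` cars: `#π⁻¹([i]) > i` for all `i ∈ [n-1]`. -/
def IsPPF (n : ℕ) (π : Fin n → ℕ) : Prop :=
  (∀ j, π j ∈ Finset.Icc 1 n) ∧
  ∀ i ∈ Finset.Icc 1 (n - 1), i < (Finset.univ.filter (fun j => π j ≤ i)).card

/-!
Let `c_π(i)` be the number of cars preferring a spot `≤ i`. The map `skipTwo` (fixing `1` and
shifting `k ≥ 2` to `k + 1`) satisfies `c_{skipTwo ∘ π}(i + 1) = c_π(i)` for `i ≥ 1` and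
`c_{skipTwo ∘ π}(1) = c_π(1)`, so it turns the strict inequalities `i < c_π(i)` of a prime
parking function into the weak inequalities `i + 1 ≤ c(i + 1)` of a parking function avoiding
the value `2`. Conversely, `dropTwo` sends any parking function to a prime one.
-/

open Finset

def skipTwo (k : ℕ) : ℕ := if k ≤ 1 then k else k + 1

def dropTwo (k : ℕ) : ℕ := if k ≤ 2 then 1 else k - 1

lemma dropTwo_skipTwo {k : ℕ} (hk : 1 ≤ k) : dropTwo (skipTwo k) = k := by
  unfold dropTwo skipTwo; split_ifs <;> omega

lemma skipTwo_dropTwo {k : ℕ} (hk : 1 ≤ k) (hk2 : k ≠ 2) : skipTwo (dropTwo k) = k := by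
  unfold dropTwo skipTwo; split_ifs <;> omega

lemma skipTwo_le_one_iff {k : ℕ} : skipTwo k ≤ 1 ↔ k ≤ 1 := by
  unfold skipTwo; split_ifs <;> omega

lemma skipTwo_le_iff {k i : ℕ} (hi : 2 ≤ i) : skipTwo k ≤ i ↔ k ≤ i - 1 := by
  unfold skipTwo; split_ifs <;> omega

lemma dropTwo_le_iff {k i : ℕ} (hi : 1 ≤ i) : dropTwo k ≤ i ↔ k ≤ i + 1 := by
  unfold dropTwo; split_ifs <;> omega

lemma card_filter_comp_le_eq {ι : Type*} [Fintype ι] {f : ℕ → ℕ} {π : ι → ℕ} {i k : ℕ}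
    (h : ∀ m, f m ≤ i ↔ m ≤ k) :
    #{j | f (π j) ≤ i} = #{j | π j ≤ k} := by
  rw [filter_congr fun j _ => h (π j)]

namespace IsPPF

variable {n : ℕ} {π : Fin n → ℕ}

theorem isPF (hπ : IsPPF n π) : IsPF n π := by
  refine ⟨hπ.1, fun i hi => ?_⟩
  rw [mem_Icc] at hi
  rcases hi.2.lt_or_eq with hlt | rfl
  · exact (hπ.2 i (mem_Icc.2 ⟨hi.1, by omega⟩)).le
  · rw [filter_true_of_mem fun j _ => (mem_Icc.1 (hπ.1 j)).2, card_univ, Fintype.card_fin]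

theorem lt_of_two_le (hπ : IsPPF n π) {j : Fin n} (hj : 2 ≤ π j) : π j < n := by
  have hjn := (mem_Icc.1 (hπ.1 j)).2
  -- `c(n - 1) > n - 1` means that every car prefers a spot `≤ n - 1`.
  have hcount := hπ.2 (n - 1) (mem_Icc.2 ⟨by omega, le_rfl⟩)
  have hall : #{j | π j ≤ n - 1} = #(univ : Finset (Fin n)) :=
    le_antisymm (card_filter_le _ _) (by rw [card_univ, Fintype.card_fin]; omega)
  have := filter_card_eq hall j (mem_univ j)
  omega

theorem isPF_skipTwo_comp (hπ : IsPPF n π) : IsPF n (skipTwo ∘ π) := by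
  refine ⟨fun j => ?_, fun i hi => ?_⟩
  · have hj := mem_Icc.1 (hπ.1 j)
    have := hπ.lt_of_two_le (j := j)
    simp only [Function.comp_apply, skipTwo, mem_Icc]
    split_ifs <;> omega
  · rw [mem_Icc] at hi
    simp only [Function.comp_apply]
    rcases hi.1.lt_or_eq with hlt | rfl
    · rw [card_filter_comp_le_eq fun _ => skipTwo_le_iff hlt]
      have := hπ.2 (i - 1) (mem_Icc.2 ⟨by omega, by omega⟩)
      omega
    · rw [card_filter_comp_le_eq fun _ => skipTwo_le_one_iff]
      exact hπ.isPF.2 1 (mem_Icc.2 ⟨le_rfl, hi.2⟩)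

theorem skipTwo_comp_mem (hπ : IsPPF n π) (j : Fin n) :
    (skipTwo ∘ π) j ∈ Icc 1 n \ {2} := by
  have hj := mem_Icc.1 (hπ.1 j)
  have := hπ.lt_of_two_le (j := j)
  simp only [Function.comp_apply, skipTwo, mem_sdiff, mem_Icc, mem_singleton]
  split_ifs <;> omega

end IsPPF

theorem IsPF.isPPF_dropTwo_comp {n : ℕ} {σ : Fin n → ℕ} (hσ : IsPF n σ) :
    IsPPF n (dropTwo ∘ σ) := by
  refine ⟨fun j => ?_, fun i hi => ?_⟩
  · have hj := mem_Icc.1 (hσ.1 j)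
    simp only [Function.comp_apply, dropTwo, mem_Icc]
    split_ifs <;> omega
  · rw [mem_Icc] at hi
    simp only [Function.comp_apply]
    rw [card_filter_comp_le_eq fun _ => dropTwo_le_iff hi.1]
    exact hσ.2 (i + 1) (mem_Icc.2 ⟨by omega, by omega⟩)

def primeEquivRestricted (n : ℕ) :
    {π : Fin n → ℕ // IsPPF n π} ≃
      {π : Fin n → ℕ // IsPF n π ∧ ∀ j, π j ∈ Icc 1 n \ {2}} where
  toFun π := ⟨skipTwo ∘ π.1, π.2.isPF_skipTwo_comp, π.2.skipTwo_comp_mem⟩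
  invFun σ := ⟨dropTwo ∘ σ.1, σ.2.1.isPPF_dropTwo_comp⟩
  left_inv π := Subtype.ext <| funext fun j => dropTwo_skipTwo (mem_Icc.1 (π.2.1 j)).1
  right_inv σ := Subtype.ext <| funext fun j => by
    obtain ⟨hj, hj2⟩ := mem_sdiff.1 (σ.2.2 j)
    exact skipTwo_dropTwo (mem_Icc.1 hj).1 (by simpa using hj2)

theorem prime_equiv_restricted_general (n : ℕ) :
    Nonempty
      ({π : Fin n → ℕ // IsPPF n π} ≃
        {π : Fin n → ℕ // IsPF n π ∧ ∀ j, π j ∈ Finset.Icc 1 n \ {2}}) ∧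
    {π : Fin n → ℕ | IsPPF n π}.ncard =
      {π : Fin n → ℕ | IsPF n π ∧ ∀ j, π j ∈ Finset.Icc 1 n \ {2}}.ncard :=
  ⟨⟨primeEquivRestricted n⟩, Nat.card_congr (primeEquivRestricted n)⟩

theorem prime_equiv_restricted (n : ℕ) (hn : 0 < n) :
    Nonempty
      ({π : Fin n → ℕ // IsPPF n π} ≃
        {π : Fin n → ℕ // IsPF n π ∧ ∀ j, π j ∈ Finset.Icc 1 n \ {2}}) ∧
    {π : Fin n → ℕ | IsPPF n π}.ncard =
      {π : Fin n → ℕ | IsPF n π ∧ ∀ j, π j ∈ Finset.Icc 1 n \ {2}}.ncard :=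
  prime_equiv_restricted_general n
end

section
/- For 1 ≤ s ≤ n, a function ψ:[n]→[s] has defect exactly n−s (i.e., the minimum possible number of cars unable to park when n cars park on s spots) if and only if the corresponding function π:[n]→[n] (composing with the inclusion [s]→[n]) is an [s]-restricted parking function. Hence the minimum-defect preference functions are in bijection with PF_{n|[s]}. -/
/-- The set of occupied spots after all `n` cars attempt to park on spots `1,…,s`:
each car drives to its preferred spot and parks in the first empty spot at or
after it, exiting unparked if there is none. -/
def finalOcc (n s : ℕ) (ψ : Fin n → ℕ) : Finset ℕ :=
  (List.finRange n).foldl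
    (fun occ j =>
      if h : ((Finset.Icc (ψ j) s) \ occ).Nonempty then
        insert (((Finset.Icc (ψ j) s) \ occ).min' h) occ
      else occ)
    ∅

/-- The number of cars that fail to park. -/
def defect (n s : ℕ) (ψ : Fin n → ℕ) : ℕ := n - (finalOcc n s ψ).card

/-!
A spot `i ≤ s` that stays empty was never passed over, so every car preferring a spot `≤ i`
parked strictly below `i`: at most `i - 1` such cars. Conversely a car parks at a spot `≤ i` only
if it prefers a spot `≤ i`. Since all cars prefer spots in `[1, s]`, the defect is `n - s`
exactly when `[1, s]` is filled, and by the two counts this happens exactly when, for every `i`,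
at least `i` cars prefer a spot `≤ i`.
-/

open Finset

def parkStep (s : ℕ) (occ : Finset ℕ) (p : ℕ) : Finset ℕ :=
  if h : (Icc p s \ occ).Nonempty then insert ((Icc p s \ occ).min' h) occ else occ

lemma finalOcc_eq_foldl_parkStep (n s : ℕ) (ψ : Fin n → ℕ) :
    finalOcc n s ψ = ((List.finRange n).map ψ).foldl (parkStep s) ∅ := by
  rw [List.foldl_map]; rfl

section parkStep

variable {s : ℕ} {occ : Finset ℕ} {p : ℕ}

lemma exists_parkStep_eq_insert {x : ℕ} (hx : x ∈ Icc p s \ occ) :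
    ∃ m ≤ x, m ∈ Icc p s \ occ ∧ parkStep s occ p = insert m occ :=
  ⟨_, min'_le _ _ hx, min'_mem _ ⟨x, hx⟩, dif_pos ⟨x, hx⟩⟩

variable (s occ p) in
lemma parkStep_eq_or :
    parkStep s occ p = occ ∨ ∃ m ∈ Icc p s \ occ, parkStep s occ p = insert m occ := by
  by_cases h : (Icc p s \ occ).Nonempty
  · obtain ⟨x, hx⟩ := h
    obtain ⟨m, -, hm, heq⟩ := exists_parkStep_eq_insert hx
    exact .inr ⟨m, hm, heq⟩
  · exact .inl (dif_neg h)

lemma subset_parkStep : occ ⊆ parkStep s occ p := by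
  rcases parkStep_eq_or s occ p with h | ⟨m, -, h⟩ <;> rw [h]
  exact subset_insert m occ

lemma parkStep_subset_Icc {a : ℕ} (hap : a ≤ p) (hocc : occ ⊆ Icc a s) :
    parkStep s occ p ⊆ Icc a s := by
  rcases parkStep_eq_or s occ p with h | ⟨m, hm, h⟩ <;> rw [h]
  · exact hocc
  · have hm := mem_Icc.mp (mem_sdiff.mp hm).1
    exact insert_subset (mem_Icc.mpr ⟨hap.trans hm.1, hm.2⟩) hocc

lemma card_filter_parkStep_le_succ (i : ℕ) :
    #{x ∈ parkStep s occ p | x ≤ i} ≤ #{x ∈ occ | x ≤ i} + 1 := by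
  rcases parkStep_eq_or s occ p with h | ⟨m, -, h⟩ <;> rw [h]
  · omega
  · rw [filter_insert]; split_ifs
    · exact card_insert_le _ _
    · omega

lemma filter_parkStep_of_lt {i : ℕ} (hip : i < p) :
    {x ∈ parkStep s occ p | x ≤ i} = {x ∈ occ | x ≤ i} := by
  rcases parkStep_eq_or s occ p with h | ⟨m, hm, h⟩ <;> rw [h]
  have hpm := (mem_Icc.mp (mem_sdiff.mp hm).1).1
  rw [filter_insert, if_neg (by omega)]

lemma card_filter_parkStep_of_notMem {i : ℕ} (hpi : p ≤ i) (his : i ≤ s)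
    (hi : i ∉ parkStep s occ p) :
    #{x ∈ parkStep s occ p | x < i} = #{x ∈ occ | x < i} + 1 := by
  have hiocc : i ∉ occ := fun h => hi (subset_parkStep h)
  obtain ⟨m, hmi, hm, heq⟩ :=
    exists_parkStep_eq_insert (mem_sdiff.mpr ⟨mem_Icc.mpr ⟨hpi, his⟩, hiocc⟩)
  have hmi' : m ≠ i := by rintro rfl; exact hi (heq ▸ mem_insert_self m occ)
  rw [heq, filter_insert, if_pos (by omega), card_insert_of_notMem]
  exact fun h => (mem_sdiff.mp hm).2 (mem_filter.mp h).1

end parkStep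

section foldl

variable {s : ℕ}

lemma subset_foldl_parkStep (L : List ℕ) (occ : Finset ℕ) : occ ⊆ L.foldl (parkStep s) occ := by
  induction L generalizing occ with
  | nil => exact Subset.refl _
  | cons p L ih => exact subset_parkStep.trans (ih _)

lemma foldl_parkStep_subset_Icc {a : ℕ} {L : List ℕ} (hL : ∀ p ∈ L, a ≤ p) {occ : Finset ℕ}
    (hocc : occ ⊆ Icc a s) : L.foldl (parkStep s) occ ⊆ Icc a s := by
  induction L generalizing occ with
  | nil => exact hocc
  | cons p L ih =>
    exact ih (fun q hq => hL q (.tail p hq))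
      (parkStep_subset_Icc (hL p List.mem_cons_self) hocc)

lemma card_filter_foldl_parkStep_le (i : ℕ) (L : List ℕ) (occ : Finset ℕ) :
    #{x ∈ L.foldl (parkStep s) occ | x ≤ i} ≤ #{x ∈ occ | x ≤ i} + L.countP (· ≤ i) := by
  induction L generalizing occ with
  | nil => simp
  | cons p L ih =>
    have := ih (parkStep s occ p)
    rw [List.foldl_cons, List.countP_cons]
    by_cases hpi : p ≤ i
    · have : #{x ∈ parkStep s occ p | x ≤ i} ≤ _ := card_filter_parkStep_le_succ i
      simp only [hpi, decide_true, if_true]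
      omega
    · rw [filter_parkStep_of_lt (by omega)] at this
      simpa [hpi] using this

lemma card_filter_le_of_notMem_foldl_parkStep {i : ℕ} (his : i ≤ s) (L : List ℕ)
    (occ : Finset ℕ) (hi : i ∉ L.foldl (parkStep s) occ) :
    #{x ∈ occ | x < i} + L.countP (· ≤ i) ≤ #{x ∈ L.foldl (parkStep s) occ | x < i} := by
  induction L generalizing occ with
  | nil => simp
  | cons p L ih =>
    rw [List.foldl_cons] at hi ⊢
    have := ih (parkStep s occ p) hi
    rw [List.countP_cons]
    by_cases hpi : p ≤ i
    · have hstep := card_filter_parkStep_of_notMem hpi his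
        (fun h => hi (subset_foldl_parkStep L _ h))
      simp only [hpi, decide_true, if_true]
      omega
    · have : #{x ∈ occ | x < i} ≤ #{x ∈ parkStep s occ p | x < i} :=
        card_le_card (filter_subset_filter _ subset_parkStep)
      simp only [hpi, decide_false, Bool.false_eq_true, if_false]
      omega

end foldl

section finalOcc

variable {n s : ℕ} {ψ : Fin n → ℕ}

lemma countP_map_finRange (P : ℕ → Prop) [DecidablePred P] :
    ((List.finRange n).map ψ).countP (fun p => P p) = #{j | P (ψ j)} := by
  rw [List.countP_map]
  simp only [Finset.filter, Finset.card, Multiset.filter_coe, Multiset.coe_card, Fin.univ_def,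
    ← List.countP_eq_length_filter]
  rfl

lemma finalOcc_subset_Icc (hψ : ∀ j, 1 ≤ ψ j) : finalOcc n s ψ ⊆ Icc 1 s := by
  rw [finalOcc_eq_foldl_parkStep]
  refine foldl_parkStep_subset_Icc ?_ (empty_subset _)
  simpa using hψ

lemma card_filter_finalOcc_le (i : ℕ) : #{x ∈ finalOcc n s ψ | x ≤ i} ≤ #{j | ψ j ≤ i} := by
  have := card_filter_foldl_parkStep_le (s := s) i ((List.finRange n).map ψ) ∅
  rwa [← finalOcc_eq_foldl_parkStep, countP_map_finRange (· ≤ i), filter_empty, card_empty,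
    zero_add] at this

lemma card_le_of_notMem_finalOcc {i : ℕ} (his : i ≤ s) (hi : i ∉ finalOcc n s ψ) :
    #{j | ψ j ≤ i} ≤ #{x ∈ finalOcc n s ψ | x < i} := by
  rw [finalOcc_eq_foldl_parkStep] at hi ⊢
  have := card_filter_le_of_notMem_foldl_parkStep his _ ∅ hi
  rwa [countP_map_finRange (· ≤ i), filter_empty, card_empty, zero_add] at this

lemma defect_eq_sub_iff_Icc_subset_finalOcc (h : s ≤ n) (hψ : ∀ j, 1 ≤ ψ j) :
    defect n s ψ = n - s ↔ Icc 1 s ⊆ finalOcc n s ψ := by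
  have hsub := finalOcc_subset_Icc (s := s) hψ
  have hcard : #(finalOcc n s ψ) ≤ s := by simpa using card_le_card hsub
  constructor
  · intro hd
    have : #(Icc 1 s) ≤ #(finalOcc n s ψ) := by
      rw [defect] at hd; rw [Nat.card_Icc]; omega
    exact (eq_of_subset_of_card_le hsub this).symm.subset
  · intro hfull
    have : s ≤ #(finalOcc n s ψ) := by simpa using card_le_card hfull
    rw [defect]; omega

lemma le_card_of_Icc_subset_finalOcc (hψ : ∀ j, ψ j ≤ s) (hfull : Icc 1 s ⊆ finalOcc n s ψ)
    {i : ℕ} (hin : i ≤ n) : i ≤ #{j | ψ j ≤ i} := by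
  by_cases his : i ≤ s
  · have hIcc : Icc 1 i ⊆ {x ∈ finalOcc n s ψ | x ≤ i} := fun x hx =>
      mem_filter.mpr ⟨hfull (Icc_subset_Icc_right his hx), (mem_Icc.mp hx).2⟩
    simpa using (card_le_card hIcc).trans (card_filter_finalOcc_le i)
  · have hall : ∀ j, ψ j ≤ i := fun j => (hψ j).trans (by omega)
    simpa [hall] using hin

lemma Icc_subset_finalOcc_of_le_card (hψ : ∀ j, 1 ≤ ψ j)
    (H : ∀ i ∈ Icc 1 s, i ≤ #{j | ψ j ≤ i}) : Icc 1 s ⊆ finalOcc n s ψ := by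
  intro i hi
  by_contra hnot
  have hi1 := (mem_Icc.mp hi).1
  have hbelow : {x ∈ finalOcc n s ψ | x < i} ⊆ Ico 1 i := fun x hx =>
    mem_Ico.mpr ⟨(mem_Icc.mp (finalOcc_subset_Icc hψ (mem_filter.mp hx).1)).1,
      (mem_filter.mp hx).2⟩
  have hcount := (card_le_of_notMem_finalOcc (mem_Icc.mp hi).2 hnot).trans (card_le_card hbelow)
  have := H i hi
  rw [Nat.card_Ico] at hcount
  omega

end finalOcc

theorem min_defect_iff_restricted_general (n s : ℕ) (h2 : s ≤ n)
    (ψ : Fin n → ℕ) (hψ : ∀ j, ψ j ∈ Finset.Icc 1 s) :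
    defect n s ψ = n - s ↔
      ∀ i ∈ Finset.Icc 1 n, i ≤ (Finset.univ.filter (fun j => ψ j ≤ i)).card := by
  have hψ1 : ∀ j, 1 ≤ ψ j := fun j => (mem_Icc.mp (hψ j)).1
  have hψs : ∀ j, ψ j ≤ s := fun j => (mem_Icc.mp (hψ j)).2
  rw [defect_eq_sub_iff_Icc_subset_finalOcc h2 hψ1]
  refine ⟨fun hfull i hi => le_card_of_Icc_subset_finalOcc hψs hfull (mem_Icc.mp hi).2,
    fun H => Icc_subset_finalOcc_of_le_card hψ1 fun i hi => H i ?_⟩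
  exact Icc_subset_Icc_right h2 hi

theorem min_defect_iff_restricted (n s : ℕ) (h1 : 1 ≤ s) (h2 : s ≤ n)
    (ψ : Fin n → ℕ) (hψ : ∀ j, ψ j ∈ Finset.Icc 1 s) :
    defect n s ψ = n - s ↔
      ∀ i ∈ Finset.Icc 1 n, i ≤ (Finset.univ.filter (fun j => ψ j ≤ i)).card :=
  min_defect_iff_restricted_general n s h2 ψ hψ
end

section
/- For 1 ≤ s ≤ n, the number of [s]-restricted parking functions on n cars equals Σ_{i=s}^{n} C(n,i)·(i+1)^{i−1}·(s−i−1)^{n−i}. -/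
/-!
Let `f(n, s)` count the `[s]`-restricted parking functions on `n` cars. Given one with values in
`[s + 1]`, let `A` be the set of cars preferring at most `s`: the cars outside `A` all prefer
`s + 1`, `#A ≥ s`, and the restriction to `A` is an `[s]`-restricted parking function on `A`; this
is a bijection, so `f(n, s + 1) = ∑_{i ≥ s} C(n, i) f(i, s)`, starting from `f(n, 0) = 0 ^ n`.
The closed form obeys the same recursion: after exchanging the two sums, the binomial theorem
`∑_i C(n, i) C(i, m) x^(i-m) = C(n, m) (x + 1)^(n-m)` turns the factor `(s - m - 1)` into `s - m`,
which kills the term `m = s`. At `s = 0` it equals `0 ^ n` because it is then, up to sign, the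
`n`-th forward difference of the polynomial `(x + 1)^(n-1)`.
-/

def IsRPF (n s : ℕ) (π : Fin n → ℕ) : Prop :=
  (∀ j, π j ∈ Finset.Icc 1 s) ∧
  ∀ i ∈ Finset.Icc 1 n, i ≤ (Finset.univ.filter (fun j => π j ≤ i)).card

open Finset

lemma card_filter_univ_subtype {α : Type*} (A : Finset α) (p : α → Prop) [DecidablePred p] :
    #{a : A | p a} = #{j ∈ A | p j} := by
  rw [univ_eq_attach, filter_attach, card_map, card_attach]

section RestrictedParkingFunctions

variable {ι κ : Type*} [Fintype ι] [Fintype κ]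

lemma card_filter_le_eq_card_filter_subtype {π : ι → ℕ} {s i : ℕ} {A : Finset ι}
    (hA : ({j | π j ≤ s} : Finset ι) = A) (hi : i ≤ s) :
    #{j | π j ≤ i} = #{a : A | π a ≤ i} := by
  rw [card_filter_univ_subtype A (fun j => π j ≤ i), ← hA, filter_filter]
  congr 1
  exact filter_congr fun j _ => ⟨fun h => ⟨h.trans hi, h⟩, And.right⟩

variable [DecidableEq ι] [DecidableEq κ]

variable (ι) in
/-- `IsRPF` for any finite type of cars, so that restricting to a subset of the cars makes sense. -/
def restrictedParkingFunctions (s : ℕ) : Finset (ι → ℕ) :=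
  {π ∈ Fintype.piFinset fun _ => Icc 1 s | ∀ i ≤ Fintype.card ι, i ≤ #{j | π j ≤ i}}

lemma mem_restrictedParkingFunctions {s : ℕ} {π : ι → ℕ} :
    π ∈ restrictedParkingFunctions ι s ↔
      (∀ j, π j ∈ Icc 1 s) ∧ ∀ i ≤ Fintype.card ι, i ≤ #{j | π j ≤ i} := by
  simp [restrictedParkingFunctions]

lemma card_restrictedParkingFunctions_congr (e : ι ≃ κ) (s : ℕ) :
    #(restrictedParkingFunctions ι s) = #(restrictedParkingFunctions κ s) := by
  refine card_equiv (e.arrowCongr (Equiv.refl ℕ)) fun π => ?_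
  have hcount (i : ℕ) : #{k | π (e.symm k) ≤ i} = #{j | π j ≤ i} :=
    card_equiv e.symm (by simp)
  simp only [mem_restrictedParkingFunctions, Equiv.arrowCongr_apply, Equiv.coe_refl,
    Function.comp_apply, id_eq, hcount, Fintype.card_congr e]
  rw [e.forall_congr_left]

lemma card_restrictedParkingFunctions_zero (n : ℕ) :
    #(restrictedParkingFunctions (Fin n) 0) = 0 ^ n := by
  cases n <;> simp [restrictedParkingFunctions]

def extendOutside (A : Finset ι) (c : ℕ) (ρ : A → ℕ) (j : ι) : ℕ :=
  if h : j ∈ A then ρ ⟨j, h⟩ else c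

lemma restrict_mem_restrictedParkingFunctions {s : ℕ} {A : Finset ι} {π : ι → ℕ}
    (hπ : π ∈ restrictedParkingFunctions ι (s + 1)) (hA : ({j | π j ≤ s} : Finset ι) = A) :
    (fun a : A => π a) ∈ restrictedParkingFunctions A s := by
  obtain ⟨hval, hcount⟩ := mem_restrictedParkingFunctions.1 hπ
  have hle (a : A) : π a ≤ s := (mem_filter.1 (Finset.ext_iff.1 hA a |>.2 a.2)).2
  rw [mem_restrictedParkingFunctions, Fintype.card_coe]
  refine ⟨fun a => mem_Icc.2 ⟨(mem_Icc.1 (hval a)).1, hle a⟩, fun i hi => ?_⟩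
  rcases le_or_gt i s with his | hsi
  · rw [← card_filter_le_eq_card_filter_subtype hA his]
    exact hcount i (hi.trans (card_le_univ A))
  · simpa [fun a => (hle a).trans hsi.le] using hi

lemma filter_extendOutside_le {s : ℕ} {A : Finset ι} {ρ : A → ℕ} (hρ : ∀ a, ρ a ≤ s) :
    ({j | extendOutside A (s + 1) ρ j ≤ s} : Finset ι) = A := by
  ext j
  rw [mem_filter]
  by_cases hj : j ∈ A
  · simpa [extendOutside, hj] using hρ ⟨j, hj⟩
  · simp [extendOutside, hj]

lemma extendOutside_mem_restrictedParkingFunctions {s : ℕ} {A : Finset ι} (hA : s ≤ #A)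
    {ρ : A → ℕ} (hρ : ρ ∈ restrictedParkingFunctions A s) :
    extendOutside A (s + 1) ρ ∈ restrictedParkingFunctions ι (s + 1) := by
  rw [mem_restrictedParkingFunctions, Fintype.card_coe] at hρ
  obtain ⟨hval, hcount⟩ := hρ
  have hbounds (j : ι) : extendOutside A (s + 1) ρ j ∈ Icc 1 (s + 1) := by
    by_cases hj : j ∈ A
    · have := mem_Icc.1 (hval ⟨j, hj⟩)
      simp only [extendOutside, hj, dif_pos, mem_Icc]
      omega
    · simp [extendOutside, hj]
  rw [mem_restrictedParkingFunctions]
  refine ⟨hbounds, fun i hi => ?_⟩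
  rcases le_or_gt i s with his | hsi
  · rw [card_filter_le_eq_card_filter_subtype
      (filter_extendOutside_le fun a => (mem_Icc.1 (hval a)).2) his]
    simpa [extendOutside] using hcount i (his.trans hA)
  · simpa [fun j => (mem_Icc.1 (hbounds j)).2.trans hsi] using hi

lemma card_fiber_restrictedParkingFunctions_succ {s : ℕ} {A : Finset ι} (hA : s ≤ #A) :
    #{π ∈ restrictedParkingFunctions ι (s + 1) | ({j | π j ≤ s} : Finset ι) = A} =
      #(restrictedParkingFunctions A s) := by
  apply card_nbij' (fun π (a : A) => π a) (extendOutside A (s + 1))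
  · intro π hπ
    rw [mem_coe, mem_filter] at hπ
    exact restrict_mem_restrictedParkingFunctions hπ.1 hπ.2
  · intro ρ hρ
    have hle (a : A) : ρ a ≤ s := (mem_Icc.1 ((mem_restrictedParkingFunctions.1 hρ).1 a)).2
    exact mem_filter.2
      ⟨extendOutside_mem_restrictedParkingFunctions hA hρ, filter_extendOutside_le hle⟩
  · intro π hπ
    rw [mem_coe, mem_filter, mem_restrictedParkingFunctions] at hπ
    obtain ⟨⟨hval, -⟩, hfib⟩ := hπ
    funext j
    by_cases hj : j ∈ A
    · simp [extendOutside, hj]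
    · have := mem_Icc.1 (hval j)
      simp only [← hfib, mem_filter, mem_univ, true_and, not_le] at hj
      simp only [extendOutside, ← hfib, mem_filter, mem_univ, true_and, dif_neg hj.not_ge]
      omega
  · intro ρ _
    funext a
    simp [extendOutside]

lemma card_restrictedParkingFunctions_succ {s : ℕ} (hs : s ≤ Fintype.card ι) :
    #(restrictedParkingFunctions ι (s + 1)) =
      ∑ i ∈ Icc s (Fintype.card ι),
        (Fintype.card ι).choose i * #(restrictedParkingFunctions (Fin i) s) := by
  have hfiber (A : Finset ι) :
      #{π ∈ restrictedParkingFunctions ι (s + 1) | ({j | π j ≤ s} : Finset ι) = A} =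
        if s ≤ #A then #(restrictedParkingFunctions (Fin #A) s) else 0 := by
    split_ifs with hA
    · rw [card_fiber_restrictedParkingFunctions_succ hA,
        card_restrictedParkingFunctions_congr (Fintype.equivFinOfCardEq (Fintype.card_coe A))]
    · refine card_eq_zero.2 (filter_eq_empty_iff.2 fun π hπ hfib => hA ?_)
      rw [← hfib]
      exact ((mem_restrictedParkingFunctions.1 hπ).2 s hs)
  calc #(restrictedParkingFunctions ι (s + 1))
      = ∑ A ∈ univ.powerset,
          #{π ∈ restrictedParkingFunctions ι (s + 1) | ({j | π j ≤ s} : Finset ι) = A} :=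
        card_eq_sum_card_fiberwise fun _ _ => mem_powerset.2 (subset_univ _)
    _ = ∑ m ∈ range (Fintype.card ι + 1), (Fintype.card ι).choose m •
          if s ≤ m then #(restrictedParkingFunctions (Fin m) s) else 0 := by
        simp_rw [hfiber]
        rw [sum_powerset_apply_card
          (fun m => if s ≤ m then #(restrictedParkingFunctions (Fin m) s) else 0), card_univ]
    _ = _ := by
        simp_rw [smul_eq_mul, mul_ite, mul_zero]
        rw [← sum_filter]
        congr 1
        ext m
        simp only [mem_filter, mem_range, mem_Icc]
        omega

end RestrictedParkingFunctions

lemma sum_alternating_choose_mul_pow_eq_zero {R : Type*} [CommRing R] (y : R) {j n : ℕ}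
    (h : j < n) : ∑ k ∈ range (n + 1), (-1) ^ (n - k) * (n.choose k : R) * (y + k) ^ j = 0 := by
  have := congr_fun (fwdDiff_iter_pow_eq_zero_of_lt (R := R) h) y
  rw [fwdDiff_iter_eq_sum_shift] at this
  simpa [zsmul_eq_mul] using this

lemma sum_Icc_choose_mul_choose_mul_pow {R : Type*} [CommSemiring R] (x : R) (m n : ℕ) :
    ∑ i ∈ Icc m n, (n.choose i * i.choose m : R) * x ^ (i - m) =
      n.choose m * (x + 1) ^ (n - m) := by
  rcases lt_or_ge n m with hnm | hmn
  · simp [Icc_eq_empty_of_lt hnm, Nat.choose_eq_zero_of_lt hnm]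
  rw [← Ico_add_one_right_eq_Icc, sum_Ico_eq_sum_range, show n + 1 - m = n - m + 1 by omega,
    add_pow, mul_sum]
  refine sum_congr rfl fun k _ => ?_
  have hchoose := Nat.choose_mul (n := n) (Nat.le_add_right m k)
  rw [Nat.add_sub_cancel_left] at hchoose
  rw [Nat.add_sub_cancel_left, one_pow, mul_one, ← Nat.cast_mul, hchoose]
  push_cast
  ring

/-- Summed over all `i ∈ [0, n]` instead, this is Abel's identity and gives `s ^ n`. -/
def truncatedAbelSum (n s : ℕ) : ℤ :=
  ∑ i ∈ Icc s n, (n.choose i : ℤ) * ((i : ℤ) + 1) ^ (i - 1) * ((s : ℤ) - i - 1) ^ (n - i)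

lemma truncatedAbelSum_zero (n : ℕ) : truncatedAbelSum n 0 = 0 ^ n := by
  cases n with
  | zero => simp [truncatedAbelSum]
  | succ n =>
    rw [zero_pow n.succ_ne_zero, truncatedAbelSum, ← Ico_add_one_right_eq_Icc,
      Nat.Ico_zero_eq_range, ← sum_alternating_choose_mul_pow_eq_zero (1 : ℤ) n.lt_succ_self]
    refine sum_congr rfl fun i hmem => ?_
    have hi : i ≤ n + 1 := Nat.lt_succ_iff.1 (mem_range.1 hmem)
    rw [show ((0 : ℕ) : ℤ) - i - 1 = (-1) * (1 + i) by push_cast; ring, mul_pow,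
      add_comm (i : ℤ)]
    rcases i with _ | i
    · simp
    · obtain ⟨d, rfl⟩ := Nat.exists_eq_add_of_le (Nat.succ_le_succ_iff.1 hi)
      rw [show i + d + 1 - (i + 1) = d by omega, Nat.add_sub_cancel, pow_add]
      ring

lemma sum_choose_mul_truncatedAbelSum {n t : ℕ} (h : t < n) :
    ∑ i ∈ Icc t n, n.choose i * truncatedAbelSum i t = truncatedAbelSum n (t + 1) := by
  calc ∑ i ∈ Icc t n, n.choose i * truncatedAbelSum i t
      = ∑ i ∈ Icc t n, ∑ m ∈ Icc t i, ((m : ℤ) + 1) ^ (m - 1) *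
          ((n.choose i * i.choose m : ℤ) * ((t : ℤ) - m - 1) ^ (i - m)) := by
        simp_rw [truncatedAbelSum, mul_sum]
        refine sum_congr rfl fun i _ => sum_congr rfl fun m _ => by ring
    _ = ∑ m ∈ Icc t n, ∑ i ∈ Icc m n, ((m : ℤ) + 1) ^ (m - 1) *
          ((n.choose i * i.choose m : ℤ) * ((t : ℤ) - m - 1) ^ (i - m)) :=
        sum_comm' fun i m => by simp only [mem_Icc]; omega
    _ = ∑ m ∈ Icc t n,
          ((m : ℤ) + 1) ^ (m - 1) * (n.choose m * ((t : ℤ) - m) ^ (n - m)) := by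
        refine sum_congr rfl fun m _ => ?_
        rw [← mul_sum, sum_Icc_choose_mul_choose_mul_pow, sub_add_cancel]
    _ = ∑ m ∈ Icc (t + 1) n,
          ((m : ℤ) + 1) ^ (m - 1) * (n.choose m * ((t : ℤ) - m) ^ (n - m)) := by
        rw [Icc_eq_cons_Ioc h.le, sum_cons, sub_self, zero_pow (by omega), mul_zero, mul_zero,
          zero_add, Icc_add_one_left_eq_Ioc]
    _ = truncatedAbelSum n (t + 1) :=
        sum_congr rfl fun m _ => by push_cast; ring

lemma card_restrictedParkingFunctions_eq_truncatedAbelSum {n s : ℕ} (hs : s ≤ n) :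
    (#(restrictedParkingFunctions (Fin n) s) : ℤ) = truncatedAbelSum n s := by
  induction s generalizing n with
  | zero =>
    rw [card_restrictedParkingFunctions_zero, truncatedAbelSum_zero]
    push_cast
    rfl
  | succ s ih =>
    rw [card_restrictedParkingFunctions_succ (by rw [Fintype.card_fin]; omega), Fintype.card_fin]
    push_cast
    rw [sum_congr rfl fun i hi => by rw [ih (mem_Icc.1 hi).1]]
    exact sum_choose_mul_truncatedAbelSum hs

lemma isRPF_iff_mem_restrictedParkingFunctions {n s : ℕ} {π : Fin n → ℕ} :
    IsRPF n s π ↔ π ∈ restrictedParkingFunctions (Fin n) s := by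
  rw [IsRPF, mem_restrictedParkingFunctions, Fintype.card_fin]
  refine and_congr_right fun _ => ⟨fun h i hi => ?_, fun h i hi => h i (mem_Icc.1 hi).2⟩
  rcases i.eq_zero_or_pos with rfl | hi0
  · exact Nat.zero_le _
  · exact h i (mem_Icc.2 ⟨hi0, hi⟩)

theorem count_restricted_pf_sum_general (n s : ℕ) (h2 : s ≤ n) :
    ({π : Fin n → ℕ | IsRPF n s π}.ncard : ℤ) =
      ∑ i ∈ Finset.Icc s n,
        (n.choose i : ℤ) * ((i : ℤ) + 1) ^ (i - 1) * ((s : ℤ) - i - 1) ^ (n - i) := by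
  have hset : {π : Fin n → ℕ | IsRPF n s π} = restrictedParkingFunctions (Fin n) s :=
    Set.ext fun _ => isRPF_iff_mem_restrictedParkingFunctions
  rw [hset, Set.ncard_coe_finset]
  exact card_restrictedParkingFunctions_eq_truncatedAbelSum h2

theorem count_restricted_pf_sum (n s : ℕ) (h1 : 1 ≤ s) (h2 : s ≤ n) :
    ({π : Fin n → ℕ | IsRPF n s π}.ncard : ℤ) =
      ∑ i ∈ Finset.Icc s n,
        (n.choose i : ℤ) * ((i : ℤ) + 1) ^ (i - 1) * ((s : ℤ) - i - 1) ^ (n - i) :=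
  count_restricted_pf_sum_general n s h2
end

section
/- Abel's binomial theorem: for all positive integers n and all complex numbers x, y, (x+y+n)^n = Σ_{i=0}^{n} C(n,i)·x·(x+i)^{i−1}·(y+n−i)^{n−i}. -/
/-!
As polynomials in `Y = y + n`, both sides form Appell sequences (`p'ₙ₊₁ = (n + 1) pₙ`)
starting from `1`, so it suffices that they agree at one point for each `n ≥ 1`. At `Y = -x`
the left side vanishes, and the right side becomes `x` times an `n`-th forward difference of
`r ↦ r ^ (n - 1)`, which vanishes as well.
-/

open Finset Polynomial

variable {R : Type*} [CommRing R]

namespace Polynomial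

theorem eq_of_derivative_eq_natCast_mul [IsAddTorsionFree R] {P Q : ℕ → R[X]} (h0 : P 0 = Q 0)
    (hP : ∀ n, derivative (P (n + 1)) = C ((n + 1 : ℕ) : R) * P n)
    (hQ : ∀ n, derivative (Q (n + 1)) = C ((n + 1 : ℕ) : R) * Q n)
    (hval : ∀ n, ∃ t, (P (n + 1)).eval t = (Q (n + 1)).eval t) : P = Q := by
  funext n
  induction n with
  | zero => exact h0
  | succ n ih =>
    obtain ⟨t, ht⟩ := hval n
    have hconst := eq_C_of_derivative_eq_zero (p := P (n + 1) - Q (n + 1)) <| by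
      rw [derivative_sub, hP, hQ, ih, sub_self]
    have hzero : (P (n + 1) - Q (n + 1)).coeff 0 = 0 := by
      simpa [ht] using (congrArg (eval t) hconst).symm
    rw [hzero, map_zero] at hconst
    exact sub_eq_zero.mp hconst

noncomputable def abelSum (c : ℕ → R) (n : ℕ) : R[X] :=
  ∑ i ∈ range (n + 1), C (n.choose i * c i) * (X - C (i : R)) ^ (n - i)

theorem derivative_abelSum (c : ℕ → R) (n : ℕ) :
    derivative (abelSum c (n + 1)) = C ((n + 1 : ℕ) : R) * abelSum c n := by
  rw [abelSum, abelSum, derivative_sum, sum_range_succ, mul_sum]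
  simp only [derivative_C_mul, derivative_X_sub_C_pow, Nat.sub_self, Nat.cast_zero, C_0,
    zero_mul, mul_zero, add_zero]
  refine sum_congr rfl fun i hi => ?_
  have hi : i ≤ n := Nat.lt_succ_iff.mp (mem_range.mp hi)
  have hchoose : ((n + 1).choose i * (n + 1 - i : ℕ) : R) = (n + 1 : ℕ) * n.choose i := by
    rw [← Nat.cast_mul, ← Nat.choose_mul_succ_eq, Nat.cast_mul, mul_comm]
  rw [show n + 1 - i - 1 = n - i by omega, ← mul_assoc, ← mul_assoc, ← C_mul, ← C_mul]
  congr 2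
  linear_combination c i * hchoose

end Polynomial

theorem sum_range_alternating_choose_mul_add_pow_eq_zero {j n : ℕ} (h : j < n) (x : R) :
    ∑ k ∈ range (n + 1), (-1 : R) ^ (n - k) * n.choose k * (x + k) ^ j = 0 := by
  have := congrFun (fwdDiff_iter_pow_eq_zero_of_lt (R := R) h) x
  rw [fwdDiff_iter_eq_sum_shift] at this
  simpa [zsmul_eq_mul] using this

/-- The `i = 0` case is the convention `x · x⁻¹ = 1`. -/
def abelCoeff (x : R) (i : ℕ) : R := if i = 0 then 1 else x * (x + i) ^ (i - 1)

theorem abelCoeff_mul_pow (x : R) {i n : ℕ} (hi : i ≤ n + 1) :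
    abelCoeff x i * (x + i) ^ (n + 1 - i) = x * (x + i) ^ n := by
  unfold abelCoeff
  split_ifs with h
  · subst h; simp [pow_succ']
  · rw [mul_assoc, ← pow_add, show i - 1 + (n + 1 - i) = n by omega]

theorem eval_neg_abelSum_abelCoeff (x : R) (n : ℕ) :
    (abelSum (abelCoeff x) (n + 1)).eval (-x) = 0 := by
  calc (abelSum (abelCoeff x) (n + 1)).eval (-x)
      = ∑ i ∈ range (n + 2), (n + 1).choose i * (abelCoeff x i * (-(x + i)) ^ (n + 1 - i)) := by
        simp only [abelSum, eval_finsetSum, eval_mul, eval_C, eval_pow, eval_sub, eval_X]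
        refine sum_congr rfl fun i _ => ?_
        ring
    _ = x * ∑ i ∈ range (n + 2), (-1 : R) ^ (n + 1 - i) * (n + 1).choose i * (x + i) ^ n := by
        rw [mul_sum]
        refine sum_congr rfl fun i hi => ?_
        have hi : i ≤ n + 1 := Nat.lt_succ_iff.mp (mem_range.mp hi)
        rw [neg_pow, mul_left_comm _ (_ ^ _), abelCoeff_mul_pow x hi]
        ring
    _ = 0 := by
        rw [sum_range_alternating_choose_mul_add_pow_eq_zero (Nat.lt_succ_self n), mul_zero]

theorem abelSum_abelCoeff [IsAddTorsionFree R] (x : R) :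
    abelSum (abelCoeff x) = fun n => (X + C x) ^ n := by
  refine eq_of_derivative_eq_natCast_mul ?_ (derivative_abelSum _) (fun n => ?_) (fun n => ?_)
  · simp [abelSum, abelCoeff]
  · rw [derivative_X_add_C_pow, Nat.add_sub_cancel]
  · exact ⟨-x, by simp [eval_neg_abelSum_abelCoeff]⟩

theorem abel_binomial_general (n : ℕ) (x y : ℂ) :
    (x + y + n) ^ n =
      (y + n) ^ n +
        ∑ i ∈ Finset.Icc 1 n,
          (n.choose i : ℂ) * x * (x + i) ^ (i - 1) * (y + n - i) ^ (n - i) := by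
  have h := congrArg (eval (y + n)) (congrFun (abelSum_abelCoeff x) n)
  rw [abelSum, range_eq_Ico, sum_eq_sum_Ico_succ_bot n.succ_pos] at h
  simp only [eval_add, eval_pow, eval_X, eval_C, eval_finsetSum, eval_mul, eval_sub] at h
  rw [show x + y + n = y + n + x by ring, ← h]
  congr 1
  · simp [abelCoeff]
  · refine sum_congr rfl fun i hi => ?_
    rw [abelCoeff, if_neg (by simp at hi; omega)]
    ring

/-- Abel's binomial theorem. The `i = 0` summand `C(n,0)·x·(x+0)^{-1}·(y+n)^n`
is interpreted as `(y+n)^n`. -/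
theorem abel_binomial (n : ℕ) (hn : 0 < n) (x y : ℂ) :
    (x + y + n) ^ n =
      (y + n) ^ n +
        ∑ i ∈ Finset.Icc 1 n,
          (n.choose i : ℂ) * x * (x + i) ^ (i - 1) * (y + n - i) ^ (n - i) :=
  abel_binomial_general n x y
end

section
/- For each positive integer n, Σ_{π ∈ PF_n} x^{#π⁻¹({1})} = x·(x+n)^{n−1} as polynomials in x, where PF_n is the set of parking functions on n cars. -/
/-!
It suffices to evaluate at `x = m` for every integer `m ≥ 1`. The number `m ^ #π⁻¹({1})`
counts the functions `g : [n] → ℤ/(n+m)` obtained from `π` by letting each car that prefers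
spot `1` choose a value in `{0, …, m - 1}` and sending a preference `k ≥ 2` to `k + m - 1`.
The `g` arising this way are exactly the `(m, 1, …, 1)`-parking functions. By the cycle lemma,
exactly `m` of the `n + m` rotations `g - a` of any `g : [n] → ℤ/(n+m)` are such parking
functions, so there are `m (n+m)^n / (n+m)` of them.
-/

open Finset

section Walk

variable {T : ℕ → ℤ} {q m : ℕ}

theorem walk_stays_above_iff (hper : ∀ k, T (k + q) = T k - m) {s₀ a : ℕ} (hs₀ : s₀ < q)
    (hmin : ∀ s < q, T s₀ ≤ T s) (ha : a < q) :
    (∀ t < q, T a - m < T (a + t)) ↔ (∀ s < a, T a < T s) ∧ T a < T s₀ + m := by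
  have hwrap : ∀ s < a, T (a + (s + q - a)) = T s - m := fun s hs => by
    rw [← hper]; congr 1; omega
  constructor
  · intro habove
    have hprefix : ∀ s < a, T a < T s := fun s hs => by
      have := habove (s + q - a) (by omega)
      rw [hwrap s hs] at this
      omega
    refine ⟨hprefix, ?_⟩
    rcases lt_or_ge s₀ a with h | h
    · have := hprefix s₀ h
      omega
    · have := habove (s₀ - a) (by omega)
      rw [Nat.add_sub_cancel' h] at this
      omega
  · rintro ⟨hprefix, hlow⟩ t ht
    rcases lt_or_ge (a + t) q with h | h
    · have := hmin (a + t) h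
      omega
    · have := hprefix (a + t - q) (by omega)
      rw [show a + t = a + t - q + q by omega, hper]
      omega

theorem exists_first_hitting_time (hstep : ∀ k, T k - 1 ≤ T (k + 1)) {v : ℤ} (h0 : v ≤ T 0)
    {k : ℕ} (hk : T k ≤ v) : ∃ a ≤ k, T a = v ∧ ∀ s < a, v < T s := by
  classical
  have hex : ∃ a, T a ≤ v := ⟨k, hk⟩
  refine ⟨Nat.find hex, Nat.find_min' hex hk, ?_, fun s hs => not_le.1 (Nat.find_min hex hs)⟩
  apply le_antisymm (Nat.find_spec hex)
  rcases h : Nat.find hex with _ | s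
  · exact h0
  · have := hstep s
    have := not_le.1 (Nat.find_min hex (h.symm ▸ Nat.lt_succ_self s : s < Nat.find hex))
    omega

theorem card_walk_stays_above (hstep : ∀ k, T k - 1 ≤ T (k + 1))
    (hper : ∀ k, T (k + q) = T k - m) :
    #{a ∈ range q | ∀ t < q, T a - m < T (a + t)} = m := by
  rcases q.eq_zero_or_pos with rfl | hq
  · have h := hper 0
    simp only [add_zero] at h
    simp only [range_zero, filter_empty, card_empty]
    omega
  obtain ⟨s₀, hs₀, hmin⟩ := exists_min_image (range q) T (nonempty_range_iff.2 hq.ne')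
  simp only [mem_range] at hs₀ hmin
  have hT0 : T s₀ + m - 1 ≤ T 0 := by
    have h1 := hstep (q - 1)
    have h2 := hmin (q - 1) (by omega)
    have h3 := hper 0
    rw [Nat.sub_add_cancel hq] at h1
    rw [zero_add] at h3
    omega
  -- The starts in question are the first hitting times of the levels `T s₀, …, T s₀ + m - 1`.
  calc #{a ∈ range q | ∀ t < q, T a - m < T (a + t)}
      = #(Ico (T s₀) (T s₀ + m)) := by
        refine card_nbij T (fun a ha => ?_) (fun a ha b hb hab => ?_) (fun v hv => ?_)
        · simp only [coe_filter, mem_range, Set.mem_ofPred_eq] at ha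
          rw [walk_stays_above_iff hper hs₀ hmin ha.1] at ha
          simp only [coe_Ico, Set.mem_Ico]
          exact ⟨hmin a ha.1, ha.2.2⟩
        · simp only [coe_filter, mem_range, Set.mem_ofPred_eq] at ha hb
          rw [walk_stays_above_iff hper hs₀ hmin ha.1] at ha
          rw [walk_stays_above_iff hper hs₀ hmin hb.1] at hb
          by_contra hne
          rcases Nat.lt_or_gt_of_ne hne with h | h
          · exact (hb.2.1 a h).ne hab.symm
          · exact (ha.2.1 b h).ne hab
        · simp only [coe_Ico, Set.mem_Ico] at hv
          obtain ⟨a, has₀, rfl, hfirst⟩ := exists_first_hitting_time hstep (by omega) hv.1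
          refine ⟨a, ?_, rfl⟩
          simp only [coe_filter, mem_range, Set.mem_ofPred_eq]
          exact ⟨by omega, (walk_stays_above_iff hper hs₀ hmin (by omega)).2 ⟨hfirst, hv.2⟩⟩
    _ = m := by simp

end Walk

namespace ZMod

variable {q : ℕ} [NeZero q]

theorem sum_range_add_natCast {M : Type*} [AddCommMonoid M] (f : ZMod q → M) (k : ZMod q) :
    ∑ u ∈ range q, f (k + u) = ∑ x, f x := by
  refine sum_nbij' (fun u => k + u) (fun x => (x - k).val) (by simp) (by simp [ZMod.val_lt])
    (fun u hu => ?_) (fun x _ => by simp) (fun _ _ => rfl)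
  simpa using ZMod.val_cast_of_lt (mem_range.1 hu)

theorem card_filter_val (p : ℕ → Prop) [DecidablePred p] :
    #{v : ZMod q | p v.val} = #{u ∈ range q | p u} :=
  card_nbij' ZMod.val Nat.cast (fun v hv => by simpa [ZMod.val_lt] using hv)
    (fun u hu => by simp_all [Nat.mod_eq_of_lt]) (fun v _ => by simp)
    (fun u hu => by simp_all [Nat.mod_eq_of_lt])

theorem card_val_sub_lt {ι : Type*} [Fintype ι] (g : ι → ZMod q) (a : ZMod q) {t : ℕ}
    (ht : t ≤ q) : #{j | (g j - a).val < t} = ∑ u ∈ range t, #{j | g j = a + u} := by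
  rw [card_eq_sum_card_fiberwise (f := fun j => (g j - a).val) (t := range t)
    (fun j hj => by simpa using hj)]
  refine sum_congr rfl fun u hu => ?_
  rw [filter_filter]
  refine congrArg Finset.card (filter_congr fun j _ => ?_)
  have hu' : u < q := (mem_range.1 hu).trans_le ht
  constructor
  · rintro ⟨-, h⟩
    rw [← h, ZMod.natCast_zmod_val, add_sub_cancel]
  · rintro h
    rw [h, add_sub_cancel_left, ZMod.val_cast_of_lt hu']
    exact ⟨mem_range.1 hu, rfl⟩

theorem card_cycle_lemma {m : ℕ} (c : ZMod q → ℕ) (hsum : ∑ x, c x + m = q) :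
    #{a : ZMod q | ∀ t < q, t < m + ∑ u ∈ range t, c (a + u)} = m := by
  set T : ℕ → ℤ := fun k => ∑ u ∈ range k, (c u : ℤ) - k with hT
  have hwin : ∀ k t, T (k + t) = T k + ∑ u ∈ range t, (c (k + u) : ℤ) - t := by
    intro k t
    simp only [hT, sum_range_add, Nat.cast_add]
    ring
  have hstep : ∀ k, T k - 1 ≤ T (k + 1) := fun k => by
    rw [hwin]
    simp
  have hper : ∀ k, T (k + q) = T k - m := fun k => by
    rw [hwin, sum_range_add_natCast (fun x => (c x : ℤ))]
    have : ∑ x, (c x : ℤ) + m = q := by exact_mod_cast hsum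
    linarith
  have hstart : ∀ a : ZMod q, (∀ t < q, t < m + ∑ u ∈ range t, c (a + u)) ↔
      ∀ t < q, T a.val - m < T (a.val + t) := fun a => by
    refine forall₂_congr fun t _ => ?_
    rw [hwin]
    simp only [ZMod.natCast_val, ZMod.cast_id', id_eq]
    constructor <;> intro h
    · have : (t : ℤ) < m + ∑ u ∈ range t, (c (a + u) : ℤ) := by exact_mod_cast h
      linarith
    · have : (t : ℤ) < m + ∑ u ∈ range t, (c (a + u) : ℤ) := by linarith
      exact_mod_cast this
  calc #{a : ZMod q | ∀ t < q, t < m + ∑ u ∈ range t, c (a + u)}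
      = #{a ∈ range q | ∀ t < q, T a - m < T (a + t)} := by
        refine card_nbij' ZMod.val (fun a => a) (fun a ha => ?_) (fun a ha => ?_)
          (fun a _ => by simp) (fun a ha => ?_)
        · simp only [coe_filter, mem_univ, true_and, Set.mem_ofPred_eq, mem_range,
            hstart] at ha ⊢
          exact ⟨ZMod.val_lt a, ha⟩
        · simp only [coe_filter, mem_range, Set.mem_ofPred_eq] at ha
          simpa [hstart, ZMod.val_cast_of_lt ha.1] using ha.2
        · simp only [coe_filter, mem_range] at ha
          exact ZMod.val_cast_of_lt ha.1
    _ = m := card_walk_stays_above hstep hper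

end ZMod

section ParkingFunction

variable {n m : ℕ}

/-- `g` is an `(m, 1, …, 1)`-parking function (Pitman–Stanley): its `i`-th smallest value,
read in `{0, …, n + m - 1}`, is at most `m + i - 2`. -/
def IsMParkingFunction (m : ℕ) (g : Fin n → ZMod (n + m)) : Prop :=
  ∀ t < n + m, t < m + #{j | (g j).val < t}

instance : DecidablePred (IsMParkingFunction (n := n) m) := fun g =>
  inferInstanceAs (Decidable (∀ t < n + m, t < m + #{j | (g j).val < t}))

def IsParkingFunction (π : Fin n → Fin n) : Prop :=
  ∀ i ∈ Icc 1 n, i ≤ #{j | (π j).val + 1 ≤ i}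

instance : DecidablePred (IsParkingFunction (n := n)) := fun π =>
  inferInstanceAs (Decidable (∀ i ∈ Icc 1 n, i ≤ #{j | (π j).val + 1 ≤ i}))

theorem card_shifts_isMParkingFunction [NeZero (n + m)] (g : Fin n → ZMod (n + m)) :
    #{a | IsMParkingFunction m fun j => g j - a} = m := by
  have hsum : ∑ x, #{j | g j = x} + m = n + m := by
    rw [← card_eq_sum_card_fiberwise (fun j _ => mem_univ (g j)), card_univ, Fintype.card_fin]
  refine Eq.trans (congrArg card ?_) (ZMod.card_cycle_lemma _ hsum)
  refine filter_congr fun a _ => forall₂_congr fun t ht => ?_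
  rw [ZMod.card_val_sub_lt g a ht.le]

theorem card_isMParkingFunction_sub_const [NeZero (n + m)] (a : ZMod (n + m)) :
    #{g : Fin n → ZMod (n + m) | IsMParkingFunction m fun j => g j - a} =
      #{g : Fin n → ZMod (n + m) | IsMParkingFunction m g} :=
  card_nbij' (fun g j => g j - a) (fun g j => g j + a) (fun g hg => by simpa using hg)
    (fun g hg => by simpa using hg) (fun g _ => by simp) (fun g _ => by simp)

theorem card_isMParkingFunction [NeZero n] :
    #{g : Fin n → ZMod (n + m) | IsMParkingFunction m g} = m * (n + m) ^ (n - 1) := by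
  have hcount := sum_card_bipartiteAbove_eq_sum_card_bipartiteBelow
    (fun a (g : Fin n → ZMod (n + m)) => IsMParkingFunction m fun j => g j - a)
    (s := univ) (t := univ)
  simp only [bipartiteAbove, bipartiteBelow, card_isMParkingFunction_sub_const,
    card_shifts_isMParkingFunction, sum_const, card_univ, ZMod.card, Fintype.card_fun,
    Fintype.card_fin, smul_eq_mul] at hcount
  have hpow : (n + m) ^ n = (n + m) * (n + m) ^ (n - 1) := by
    rw [← pow_succ', Nat.sub_add_cancel (NeZero.pos n)]
  rw [hpow, mul_assoc] at hcount
  rw [mul_comm]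
  exact Nat.eq_of_mul_eq_mul_left (NeZero.pos _) hcount

theorem card_val_add_one_sub_eq [NeZero (n + m)] {k : ℕ} (hk : k < n) :
    #{v : ZMod (n + m) | v.val + 1 - m = k} = if k = 0 then m else 1 := by
  rw [ZMod.card_filter_val (fun u => u + 1 - m = k)]
  split_ifs with h
  · convert card_range m using 2
    ext u; simp only [mem_filter, mem_range]; omega
  · rw [card_eq_one]
    refine ⟨k + m - 1, ?_⟩
    ext u; simp only [mem_filter, mem_range, mem_singleton]; omega

theorem IsMParkingFunction.val_add_one_lt {g : Fin n → ZMod (n + m)}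
    (hg : IsMParkingFunction m g) (j : Fin n) : (g j).val + 1 < n + m := by
  have hlast := hg (n + m - 1) (by have := j.pos; omega)
  have hall : #{j | (g j).val < n + m - 1} = #(univ : Finset (Fin n)) :=
    le_antisymm (card_le_univ _) (by rw [card_univ, Fintype.card_fin]; omega)
  have := filter_card_eq hall j (mem_univ j)
  omega

variable [NeZero n] {g : Fin n → ZMod (n + m)}

/-- Truncated subtraction sends all of `0, …, m - 1` to `0`, i.e. to spot `1`; the reduction
mod `n` never acts on an `(m, 1, …, 1)`-parking function. -/
def toParkingFunction (m : ℕ) (g : Fin n → ZMod (n + m)) : Fin n → Fin n :=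
  fun j => Fin.ofNat n ((g j).val + 1 - m)

theorem IsMParkingFunction.isParkingFunction (hg : IsMParkingFunction m g) :
    IsParkingFunction (toParkingFunction m g) := by
  intro i hi
  rw [mem_Icc] at hi
  have hcount := hg (i + m - 1) (by omega)
  calc i ≤ #{j | (g j).val < i + m - 1} := by omega
    _ ≤ #{j | (toParkingFunction m g j).val + 1 ≤ i} := card_le_card fun j hj => by
      simp only [mem_filter, mem_univ, true_and] at hj ⊢
      simp only [toParkingFunction, Fin.val_ofNat]
      have := Nat.mod_le ((g j).val + 1 - m) n
      omega

theorem isMParkingFunction_and_toParkingFunction_eq_iff {π : Fin n → Fin n}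
    (hπ : IsParkingFunction π) :
    IsMParkingFunction m g ∧ toParkingFunction m g = π ↔ ∀ j, (g j).val + 1 - m = π j := by
  constructor
  · rintro ⟨hg, rfl⟩ j
    simp only [toParkingFunction, Fin.val_ofNat]
    have := hg.val_add_one_lt j
    have := j.pos
    rw [Nat.mod_eq_of_lt (by omega)]
  · intro hgπ
    refine ⟨fun t ht => ?_, funext fun j => Fin.ext ?_⟩
    · rcases lt_or_ge t m with htm | htm
      · omega
      · have := hπ (t + 1 - m) (mem_Icc.2 ⟨by omega, by omega⟩)
        calc t < m + #{j | (π j).val + 1 ≤ t + 1 - m} := by omega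
          _ ≤ m + #{j | (g j).val < t} := Nat.add_le_add_left (card_le_card fun j hj => by
            simp only [mem_filter, mem_univ, true_and] at hj ⊢
            have := hgπ j
            omega) m
    · rw [toParkingFunction, Fin.val_ofNat, hgπ j, Nat.mod_eq_of_lt (π j).isLt]

theorem sum_parkingFunctions_pow_card_preimage_zero :
    ∑ π : Fin n → Fin n with IsParkingFunction π, m ^ #{j | π j = 0} =
      m * (n + m) ^ (n - 1) := by
  rw [← card_isMParkingFunction, card_eq_sum_card_fiberwise (f := toParkingFunction m)
    (t := {π | IsParkingFunction π}) fun g hg => by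
      simpa using (by simpa using hg : IsMParkingFunction m g).isParkingFunction]
  refine sum_congr rfl fun π hπ => ?_
  have hfiber : ({g | IsMParkingFunction m g} : Finset (Fin n → ZMod (n + m))).filter
      (toParkingFunction m · = π) =
      Fintype.piFinset fun j => {v : ZMod (n + m) | v.val + 1 - m = (π j).val} := by
    ext g
    simp only [filter_filter, mem_filter, mem_univ, true_and, Fintype.mem_piFinset]
    exact isMParkingFunction_and_toParkingFunction_eq_iff (by simpa using hπ)
  rw [hfiber, Fintype.card_piFinset]
  simp only [card_val_add_one_sub_eq (π _).isLt, Fin.val_eq_zero_iff, prod_ite, prod_const,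
    one_pow, mul_one]

end ParkingFunction

open Polynomial in
open Classical in
theorem ones_enumerator (n : ℕ) (hn : 0 < n) :
    ∑ π ∈ Finset.univ.filter
        (fun π : Fin n → Fin n =>
          ∀ i ∈ Finset.Icc 1 n,
            i ≤ (Finset.univ.filter (fun j => (π j).val + 1 ≤ i)).card),
      (X : Polynomial ℤ) ^ (Finset.univ.filter (fun j => (π j).val + 1 = 1)).card
    = X * (X + C (n : ℤ)) ^ (n - 1) := by
  have : NeZero n := ⟨hn.ne'⟩
  refine eq_of_infinite_eval_eq _ _ (Set.infinite_of_injective_forall_mem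
    (f := fun m : ℕ => ((m + 1 : ℕ) : ℤ)) (fun a b h => by simpa using h) fun m => ?_)
  have hm : ∑ π : Fin n → Fin n with IsParkingFunction π, ((m + 1 : ℕ) : ℤ) ^ #{j | π j = 0} =
      ((m + 1 : ℕ) : ℤ) * ((m + 1 : ℕ) + n : ℤ) ^ (n - 1) := by
    have := sum_parkingFunctions_pow_card_preimage_zero (n := n) (m := m + 1)
    rw [add_comm n] at this
    exact_mod_cast this
  simp only [Set.mem_ofPred_eq, eval_finsetSum, eval_pow, eval_X, eval_mul, eval_add, eval_C,
    add_eq_right, Fin.val_eq_zero_iff]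
  convert hm using 3
  rfl
end

section
/- For 1 ≤ s ≤ n, the number of nondecreasing [s]-restricted parking functions on n cars equals the Catalan triangle entry C(n, s−1), where C(n,k) = (n−k+1)/(n+1) · binom(n+k, k). -/
/-- A nondecreasing `[s]`-restricted parking function on `n` cars:
nondecreasing `π : [n] → [s]` with `π(i) ≤ i` (car `j : Fin n` is the
`(j+1)`-st car). -/
def IsNDRPF (n s : ℕ) (π : Fin n → ℕ) : Prop :=
  Monotone π ∧ (∀ j, π j ∈ Finset.Icc 1 s) ∧ ∀ j : Fin n, π j ≤ j.val + 1

/-!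
Split the nondecreasing `[s + 1]`-restricted parking functions on `n + 1` cars according to
whether the last car prefers `s + 1`: deleting that car is a bijection onto those on `n` cars,
and the others are exactly the `[s]`-restricted ones. So the counts obey the Catalan-triangle
recursion `C(n + 1, k + 1) = C(n, k + 1) + C(n + 1, k)` for `k < n`, while `C(n, n) = C(n, n - 1)`
because no car on `n` cars prefers more than `n`. The ballot numbers
`binom(n + k, n) - binom(n + k, n + 1)` satisfy the same relations (by Pascal's rule and the
symmetry of `binom(2n - 1, ·)`), and `binom(n + k, n + 1) * (n + 1) = binom(n + k, n) * k` turns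
them into `(n - k + 1) * binom(n + k, k) / (n + 1)`.
-/

theorem Fin.monotone_snoc {α : Type*} [Preorder α] {n : ℕ} {f : Fin n → α} {a : α}
    (hf : Monotone f) (ha : ∀ i, f i ≤ a) : Monotone (Fin.snoc f a : Fin (n + 1) → α) := by
  intro i j hij
  induction j using Fin.lastCases with
  | last => induction i using Fin.lastCases <;> simp [ha]
  | cast j =>
    induction i using Fin.lastCases with
    | last => exact absurd hij (Fin.castSucc_lt_last j).not_ge
    | cast i => simpa using hf (Fin.castSucc_le_castSucc_iff.mp hij)

open Finset

open Classical in
noncomputable def ndrpfFinset (n s : ℕ) : Finset (Fin n → ℕ) :=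
  (Fintype.piFinset fun _ ↦ Icc 1 s).filter fun π ↦ Monotone π ∧ ∀ j : Fin n, π j ≤ j.val + 1

section
variable {n s k : ℕ}

theorem mem_ndrpfFinset {π : Fin n → ℕ} : π ∈ ndrpfFinset n s ↔ IsNDRPF n s π := by
  simp only [ndrpfFinset, IsNDRPF, mem_filter, Fintype.mem_piFinset]
  tauto

theorem ndrpfFinset_one (n : ℕ) : ndrpfFinset n 1 = {fun _ ↦ 1} := by
  ext π
  simp only [mem_ndrpfFinset, mem_singleton]
  constructor
  · rintro ⟨-, hv, -⟩
    funext j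
    have := mem_Icc.mp (hv j)
    omega
  · rintro rfl
    exact ⟨monotone_const, by simp, by simp⟩

theorem ndrpfFinset_succ_of_le (h : n ≤ s) : ndrpfFinset n (s + 1) = ndrpfFinset n s := by
  ext π
  simp only [mem_ndrpfFinset, IsNDRPF, mem_Icc]
  refine ⟨fun ⟨hm, hv, hb⟩ ↦ ⟨hm, fun j ↦ ⟨(hv j).1, ?_⟩, hb⟩,
    fun ⟨hm, hv, hb⟩ ↦ ⟨hm, fun j ↦ ⟨(hv j).1, (hv j).2.trans s.le_succ⟩, hb⟩⟩
  have := hb j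
  have := j.isLt
  omega

theorem filter_ndrpfFinset_last_eq (hs : s ≤ n) :
    (ndrpfFinset (n + 1) (s + 1)).filter (fun π ↦ π (Fin.last n) = s + 1) =
      (ndrpfFinset n (s + 1)).image (Fin.snoc · (s + 1)) := by
  ext π
  simp only [mem_filter, mem_image, mem_ndrpfFinset, IsNDRPF, mem_Icc]
  constructor
  · rintro ⟨⟨hm, hv, hb⟩, hlast⟩
    refine ⟨Fin.init π, ⟨hm.comp fun _ _ ↦ Fin.castSucc_le_castSucc_iff.mpr,
      fun j ↦ hv j.castSucc, fun j ↦ hb j.castSucc⟩, ?_⟩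
    rw [← hlast, Fin.snoc_init_self]
  · rintro ⟨f, ⟨hm, hv, hb⟩, rfl⟩
    refine ⟨⟨Fin.monotone_snoc hm fun j ↦ (hv j).2, fun j ↦ ?_, fun j ↦ ?_⟩, Fin.snoc_last _ _⟩ <;>
      induction j using Fin.lastCases <;> simp [hv, hb]
    omega

theorem filter_ndrpfFinset_last_ne :
    (ndrpfFinset (n + 1) (s + 1)).filter (fun π ↦ π (Fin.last n) ≠ s + 1) =
      ndrpfFinset (n + 1) s := by
  ext π
  simp only [mem_filter, mem_ndrpfFinset, IsNDRPF, mem_Icc]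
  constructor
  · rintro ⟨⟨hm, hv, hb⟩, hlast⟩
    refine ⟨hm, fun j ↦ ⟨(hv j).1, ?_⟩, hb⟩
    have := hm (Fin.le_last j)
    have := (hv (Fin.last n)).2
    omega
  · rintro ⟨hm, hv, hb⟩
    refine ⟨⟨hm, fun j ↦ ⟨(hv j).1, (hv j).2.trans s.le_succ⟩, hb⟩, ?_⟩
    have := (hv (Fin.last n)).2
    omega

theorem card_ndrpfFinset_succ_succ (hs : s ≤ n) :
    #(ndrpfFinset (n + 1) (s + 1)) = #(ndrpfFinset n (s + 1)) + #(ndrpfFinset (n + 1) s) := by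
  rw [← card_filter_add_card_filter_not (fun π ↦ π (Fin.last n) = s + 1),
    filter_ndrpfFinset_last_eq hs, filter_ndrpfFinset_last_ne,
    card_image_of_injective _ (Fin.snoc_injective2.left _)]

theorem card_ndrpfFinset_add_choose (hk : k ≤ n) :
    #(ndrpfFinset n (k + 1)) + (n + k).choose (n + 1) = (n + k).choose n := by
  induction n generalizing k with
  | zero => simp [Nat.le_zero.mp hk, ndrpfFinset_one]
  | succ n ihn =>
    induction k with
    | zero => simp [ndrpfFinset_one]
    | succ k ihk =>
      have hpascal₁ := Nat.choose_succ_succ' (n + k + 1) (n + 1)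
      have hpascal₂ := Nat.choose_succ_succ' (n + k + 1) n
      have h₂ := ihk (by omega)
      rw [show n + 1 + k = n + k + 1 by omega] at h₂
      rw [show n + 1 + (k + 1) = n + k + 1 + 1 by omega]
      rcases (Nat.lt_succ_iff.mp hk).lt_or_eq with hkn | rfl
      · have h₁ := ihn (k := k + 1) hkn
        rw [card_ndrpfFinset_succ_succ (s := k + 1) hkn]
        rw [show n + (k + 1) = n + k + 1 by omega] at h₁
        omega
      · have hsymm := Nat.choose_symm_half k
        rw [ndrpfFinset_succ_of_le le_rfl]
        rw [show k + k + 1 = 2 * k + 1 by omega] at h₂ hpascal₁ hpascal₂ ⊢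
        omega

theorem card_ndrpfFinset_mul (hk : k ≤ n) :
    #(ndrpfFinset n (k + 1)) * (n + 1) = (n - k + 1) * (n + k).choose k := by
  have hballot := card_ndrpfFinset_add_choose hk
  have hshift : (n + k).choose (n + 1) * (n + 1) = (n + k).choose n * k := by
    simpa using Nat.choose_succ_right_eq (n + k) n
  rw [Nat.choose_symm_add] at hballot hshift
  obtain ⟨m, rfl⟩ := Nat.exists_eq_add_of_le hk
  rw [show k + m - k + 1 = m + 1 by omega]
  nlinarith

end

/-- `#PF↑_{n|[s]} = C(n, s-1)` where `C(n,k) = (n-k+1)·binom(n+k,k)/(n+1)`,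
stated with the division cleared. -/
theorem count_nondecreasing_restricted (n s : ℕ) (h1 : 1 ≤ s) (h2 : s ≤ n) :
    {π : Fin n → ℕ | IsNDRPF n s π}.ncard * (n + 1) =
      (n - (s - 1) + 1) * (n + (s - 1)).choose (s - 1) := by
  obtain ⟨k, rfl⟩ := Nat.exists_eq_add_of_le' h1
  have hset : {π : Fin n → ℕ | IsNDRPF n (k + 1) π} = ndrpfFinset n (k + 1) := by
    ext π
    exact mem_ndrpfFinset.symm
  rw [hset, Set.ncard_coe_finset, Nat.add_sub_cancel]
  exact card_ndrpfFinset_mul (by omega)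
end

section
/- The number of nondecreasing parking functions on n cars whose maximum value is exactly s equals the Catalan triangle entry C(n−1, s−1). -/
/-!
Let `ndpfLE n a` be the nondecreasing parking functions on `n` cars with all values at most `a`.
Those on `m + 1` cars with maximum exactly `s` are the ones in `ndpfLE (m + 1) s` whose last
value is `s`, and deleting that last value identifies them with `ndpfLE m s`. Splitting
`ndpfLE (m + 1) (a + 1)` the same way gives the Pascal-type recurrence
`#ndpfLE (m+1) (a+1) = #ndpfLE (m+1) a + #ndpfLE m (a+1)` for `a ≤ m`, which together with its
boundary values is solved by the ballot numbers `C(m+k, k) - C(m+k, k-1)`; these are the entries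
`C(m, k)` of the Catalan triangle.
-/

open Finset

def IsNDPF (n : ℕ) (π : Fin n → ℕ) : Prop :=
  Monotone π ∧ (∀ j, π j ∈ Finset.Icc 1 n) ∧ ∀ j : Fin n, π j ≤ j.val + 1

theorem Fin.monotone_snoc_iff {α : Type*} [Preorder α] {m : ℕ} {ρ : Fin m → α} {c : α} :
    Monotone (Fin.snoc ρ c : Fin (m + 1) → α) ↔ Monotone ρ ∧ ∀ i, ρ i ≤ c := by
  refine ⟨fun h => ⟨fun i j hij => ?_, fun i => ?_⟩, fun ⟨hρ, hc⟩ i j hij => ?_⟩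
  · simpa using h (Fin.castSucc_le_castSucc_iff.2 hij)
  · simpa using h (Fin.le_last i.castSucc)
  · induction j using Fin.lastCases with
    | last => induction i using Fin.lastCases with
      | last => simp
      | cast i => simpa using hc i
    | cast j => induction i using Fin.lastCases with
      | last => exact absurd hij (not_le.2 (Fin.castSucc_lt_last j))
      | cast i => simpa using hρ (Fin.castSucc_le_castSucc_iff.1 hij)

open Classical in
noncomputable def ndpfLE (n a : ℕ) : Finset (Fin n → ℕ) :=
  {π ∈ Fintype.piFinset fun _ => Icc 1 a | Monotone π ∧ ∀ j : Fin n, π j ≤ j + 1}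

variable {m n a k : ℕ}

theorem mem_ndpfLE {π : Fin n → ℕ} :
    π ∈ ndpfLE n a ↔ Monotone π ∧ ∀ j, 1 ≤ π j ∧ π j ≤ a ∧ π j ≤ j + 1 := by
  simp [ndpfLE, forall_and]
  tauto

theorem snoc_mem_ndpfLE {ρ : Fin m → ℕ} {c : ℕ} :
    Fin.snoc ρ c ∈ ndpfLE (m + 1) a ↔ ρ ∈ ndpfLE m c ∧ 1 ≤ c ∧ c ≤ a ∧ c ≤ m + 1 := by
  simp only [mem_ndpfLE, Fin.monotone_snoc_iff, Fin.forall_fin_succ', Fin.snoc_castSucc,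
    Fin.snoc_last, Fin.val_castSucc, Fin.val_last]
  constructor
  · rintro ⟨⟨hρ, hc⟩, hb, h1, h2, h3⟩
    exact ⟨⟨hρ, fun j => ⟨(hb j).1, hc j, (hb j).2.2⟩⟩, h1, h2, h3⟩
  · rintro ⟨⟨hρ, hb⟩, h1, h2, h3⟩
    exact ⟨⟨hρ, fun j => (hb j).2.1⟩, fun j => ⟨(hb j).1, (hb j).2.1.trans h2, (hb j).2.2⟩,
      h1, h2, h3⟩

theorem card_filter_ndpfLE_last_eq (h1 : 1 ≤ a) (h2 : a ≤ m + 1) :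
    #{π ∈ ndpfLE (m + 1) a | π (Fin.last m) = a} = #(ndpfLE m a) := by
  refine card_nbij' Fin.init (Fin.snoc · a) (fun π hπ => ?_) (fun ρ hρ => ?_)
    (fun π hπ => ?_) (fun ρ _ => Fin.init_snoc _ _)
  · rw [mem_coe, mem_filter, ← Fin.snoc_init_self π, snoc_mem_ndpfLE, Fin.snoc_last] at hπ
    rw [mem_coe, ← hπ.2]
    exact hπ.1.1
  · simp_all [snoc_mem_ndpfLE]
  · rw [mem_coe, mem_filter] at hπ
    simp only [← hπ.2, Fin.snoc_init_self]

theorem filter_ndpfLE_last_ne (a : ℕ) :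
    {π ∈ ndpfLE (m + 1) (a + 1) | π (Fin.last m) ≠ a + 1} = ndpfLE (m + 1) a := by
  ext π
  rw [mem_filter, ← Fin.snoc_init_self π, snoc_mem_ndpfLE, snoc_mem_ndpfLE, Fin.snoc_last]
  grind

theorem card_ndpfLE_succ (h : a ≤ m) :
    #(ndpfLE (m + 1) (a + 1)) = #(ndpfLE (m + 1) a) + #(ndpfLE m (a + 1)) := by
  rw [← card_filter_add_card_filter_not (fun π => π (Fin.last m) = a + 1),
    card_filter_ndpfLE_last_eq (by omega) (by omega), filter_ndpfLE_last_ne, add_comm]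

theorem ndpfLE_succ_of_le (h : n ≤ a) : ndpfLE n (a + 1) = ndpfLE n a := by
  ext π
  simp only [mem_ndpfLE]
  grind

theorem card_ndpfLE_zero_left : #(ndpfLE 0 a) = 1 := by
  rw [card_eq_one]
  refine ⟨Fin.elim0, ext fun π => ?_⟩
  simp [mem_ndpfLE, Subsingleton.elim π Fin.elim0, Subsingleton.monotone]

theorem ndpfLE_succ_zero : ndpfLE (m + 1) 0 = ∅ := by
  ext π
  simp only [mem_ndpfLE, notMem_empty, iff_false]
  exact fun ⟨_, h⟩ => by have := h 0; omega

/-- The ballot number `C(m+k, k) - C(m+k, k-1)`, written additively: `C(m+k, m+1)` is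
`C(m+k, k-1)` for `k ≥ 1` and vanishes for `k = 0`, where `k - 1` would truncate. -/
theorem card_ndpfLE_add_choose (hk : k ≤ m) :
    #(ndpfLE m (k + 1)) + (m + k).choose (m + 1) = (m + k).choose k := by
  induction m generalizing k with
  | zero =>
    obtain rfl : k = 0 := Nat.le_zero.1 hk
    simp [card_ndpfLE_zero_left]
  | succ m ihm =>
    induction k with
    | zero =>
      have := ihm (Nat.zero_le m)
      simp_all [card_ndpfLE_succ, ndpfLE_succ_zero]
    | succ k ihk =>
      have ihk := ihk (by omega)
      rw [show m + 1 + k = m + k + 1 by omega] at ihk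
      rw [show m + 1 + (k + 1) = m + k + 1 + 1 by omega, Nat.choose_succ_succ' _ (m + 1),
        Nat.choose_succ_succ' _ k]
      rcases Nat.lt_or_eq_of_le (Nat.le_of_succ_le_succ hk) with hkm | rfl
      · have ihm := ihm (k := k + 1) (by omega)
        rw [show m + (k + 1) = m + k + 1 by omega] at ihm
        rw [card_ndpfLE_succ (by omega)]
        omega
      · rw [ndpfLE_succ_of_le le_rfl]
        omega

theorem card_ndpfLE_mul (hk : k ≤ m) :
    #(ndpfLE m (k + 1)) * (m + 1) = (m - k + 1) * (m + k).choose k := by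
  have hballot := card_ndpfLE_add_choose hk
  have hchoose : (m + k).choose (m + 1) * (m + 1) = (m + k).choose k * k := by
    rw [Nat.choose_succ_right_eq, Nat.choose_symm_add, Nat.add_sub_cancel_left]
  obtain ⟨d, rfl⟩ := Nat.exists_eq_add_of_le hk
  rw [show k + d - k + 1 = d + 1 by omega]
  nlinarith

theorem setOf_isNDPF_max_eq (m s : ℕ) :
    {π : Fin (m + 1) → ℕ | IsNDPF (m + 1) π ∧ (∀ j, π j ≤ s) ∧ ∃ j, π j = s} =
      ↑{π ∈ ndpfLE (m + 1) s | π (Fin.last m) = s} := by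
  ext π
  simp only [IsNDPF, Set.mem_ofPred_eq, coe_filter, mem_ndpfLE, mem_Icc]
  refine ⟨fun ⟨⟨hπ, hb, hj⟩, hs, j, hjs⟩ => ⟨⟨hπ, fun i => ⟨(hb i).1, hs i, hj i⟩⟩, ?_⟩,
    fun ⟨⟨hπ, hb⟩, hlast⟩ => ⟨⟨hπ, fun i => ⟨(hb i).1, ?_⟩, fun i => (hb i).2.2⟩,
      fun i => (hb i).2.1, _, hlast⟩⟩
  · exact le_antisymm (hs _) (hjs ▸ hπ (Fin.le_last j))
  · exact (hb i).2.2.trans (by omega)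

/-- The number of nondecreasing parking functions with maximum value exactly `s`
is the Catalan triangle entry `C(n-1, s-1) = (n-s+1)·binom(n+s-2, s-1)/n`,
stated with the division cleared. -/
theorem count_nondecreasing_max (n s : ℕ) (h1 : 1 ≤ s) (h2 : s ≤ n) :
    {π : Fin n → ℕ | IsNDPF n π ∧ (∀ j, π j ≤ s) ∧ ∃ j, π j = s}.ncard *
        ((n - 1) + 1) =
      ((n - 1) - (s - 1) + 1) * ((n - 1) + (s - 1)).choose (s - 1) := by
  obtain ⟨m, rfl⟩ : ∃ m, n = m + 1 := ⟨n - 1, by omega⟩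
  obtain ⟨k, rfl⟩ : ∃ k, s = k + 1 := ⟨s - 1, by omega⟩
  rw [setOf_isNDPF_max_eq, Set.ncard_coe_finset, card_filter_ndpfLE_last_eq h1 h2,
    Nat.add_sub_cancel, Nat.add_sub_cancel, card_ndpfLE_mul (by omega)]
end

section
/- For 1 ≤ s ≤ n and a permutation σ of [n], the number of [s]-restricted parking functions on n cars whose parking outcome is σ equals Π_{i=1}^{n} max{0, ℓ_{n,i}(σ) − max{0, i−s}}, where ℓ_{n,i}(σ) is the length of the longest contiguous suffix σ_j σ_{j+1} … σ_i of the one-line notation of σ ending at position i whose maximum entry is σ_i. -/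
/-- `outcomeMap n π t` is the (1-indexed) number of the car that ends up parked
in spot `t` under the parking procedure on `n` spots (or `0` if `t` stays empty):
cars enter in order; each drives to its preferred spot and parks in the first
empty spot at or after it. -/
def outcomeMap (n : ℕ) (π : Fin n → ℕ) : ℕ → ℕ :=
  (List.finRange n).foldl
    (fun m j =>
      if h : ((Finset.Icc (π j) n).filter (fun t => m t = 0)).Nonempty then
        Function.update m (((Finset.Icc (π j) n).filter (fun t => m t = 0)).min' h)
          (j.val + 1)
      else m)
    (fun _ => 0)

/-- `ℓ_{n,i}(σ)`: the length of the longest contiguous suffix of the one-line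
notation of `σ` ending at position `i` whose maximum entry is `σ i`. -/
def ell (n : ℕ) (σ : Equiv.Perm (Fin n)) (i : Fin n) : ℕ :=
  (Finset.univ.filter
      (fun j : Fin n => j ≤ i ∧ ∀ t : Fin n, j ≤ t → t ≤ i → σ t ≤ σ i)).sup
    (fun j => i.val - j.val + 1)

/-! Spot `i + 1` ends up holding car `σ i` exactly when car `σ i` prefers a spot `p` with
`i + 2 - ℓ_i ≤ p ≤ i + 1`: the spots it drives past must already hold earlier cars, i.e. cars
with smaller numbers, and the longest such run of spots ending at `i + 1` has length `ℓ_i`. These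
preferences automatically form a parking function, so the `[s]`-restricted ones with outcome `σ`
form a box whose `i`-th side `[i + 2 - ℓ_i, min (i + 1) s]` has `ℓ_i - (i + 1 - s)` points. -/

namespace Parking

variable {n : ℕ}

section Procedure

variable (π : Fin n → ℕ)

def parkStep (m : ℕ → ℕ) (j : Fin n) : ℕ → ℕ :=
  if h : ((Finset.Icc (π j) n).filter (fun t => m t = 0)).Nonempty then
    Function.update m (((Finset.Icc (π j) n).filter (fun t => m t = 0)).min' h) (j.val + 1)
  else m

def parkAfter (k : ℕ) : ℕ → ℕ :=
  ((List.finRange n).take k).foldl (parkStep π) (fun _ => 0)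

theorem parkAfter_zero : parkAfter π 0 = fun _ => 0 := rfl

theorem parkAfter_self : parkAfter π n = outcomeMap n π := by
  rw [parkAfter, List.take_of_length_le (by simp)]
  rfl

theorem parkAfter_succ {k : ℕ} (hk : k < n) :
    parkAfter π (k + 1) = parkStep π (parkAfter π k) ⟨k, hk⟩ := by
  have hget : (List.finRange n)[k]? = some ⟨k, hk⟩ := by simp [hk]
  simp [parkAfter, List.take_add_one, hget]

variable {π}

theorem parkStep_eq_update {m : ℕ → ℕ} {j : Fin n} {t : ℕ} (hfree : m t = 0)
    (hpt : π j ≤ t) (htn : t ≤ n) (hocc : ∀ t', π j ≤ t' → t' < t → m t' ≠ 0) :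
    parkStep π m j = Function.update m t (j.val + 1) := by
  have hmem : t ∈ (Finset.Icc (π j) n).filter (fun t => m t = 0) := by
    simp [hfree, hpt, htn]
  rw [parkStep, dif_pos ⟨t, hmem⟩]
  congr
  refine le_antisymm (Finset.min'_le _ _ hmem) (not_lt.1 fun hlt => ?_)
  obtain ⟨hIcc, hzero⟩ := Finset.mem_filter.1 (Finset.min'_mem _ ⟨t, hmem⟩)
  exact hocc _ (Finset.mem_Icc.1 hIcc).1 hlt hzero

theorem parkStep_eq_or_update (m : ℕ → ℕ) (j : Fin n) :
    parkStep π m j = m ∨ ∃ t, m t = 0 ∧ π j ≤ t ∧ (∀ t', π j ≤ t' → t' < t → m t' ≠ 0) ∧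
      parkStep π m j = Function.update m t (j.val + 1) := by
  by_cases hne : ((Finset.Icc (π j) n).filter (fun t => m t = 0)).Nonempty
  · obtain ⟨hIcc, hzero⟩ := Finset.mem_filter.1 (Finset.min'_mem _ hne)
    refine .inr ⟨_, hzero, (Finset.mem_Icc.1 hIcc).1, fun t' hpt' hlt hz => ?_,
      by rw [parkStep, dif_pos hne]⟩
    have hmem : t' ∈ (Finset.Icc (π j) n).filter (fun t => m t = 0) := by
      simp only [Finset.mem_filter, Finset.mem_Icc] at hIcc ⊢
      exact ⟨⟨hpt', by omega⟩, hz⟩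
    exact absurd (Finset.min'_le _ _ hmem) (not_le.2 hlt)
  · exact .inl (by rw [parkStep, dif_neg hne])

end Procedure

section Invariants

variable {π : Fin n → ℕ}

theorem parkAfter_le {k : ℕ} (hk : k ≤ n) (t : ℕ) : parkAfter π k t ≤ k := by
  induction k generalizing t with
  | zero => simp [parkAfter_zero]
  | succ k ih =>
    rw [parkAfter_succ π hk]
    rcases parkStep_eq_or_update (π := π) (parkAfter π k) ⟨k, hk⟩ with h | ⟨t₀, -, -, -, h⟩
    · rw [h]; exact (ih (by omega) t).trans k.le_succ
    · rw [h, Function.update_apply]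
      split_ifs
      · exact le_rfl
      · exact (ih (by omega) t).trans k.le_succ

theorem parkAfter_eq_succ {k : ℕ} (hk : k ≤ n) {t : ℕ} {j : Fin n}
    (h : parkAfter π k t = j.val + 1) :
    π j ≤ t ∧ ∀ t', π j ≤ t' → t' < t → 0 < parkAfter π k t' ∧ parkAfter π k t' ≤ j.val := by
  induction k generalizing t with
  | zero => simp [parkAfter_zero] at h
  | succ k ih =>
    replace ih := @ih (by omega)
    rw [parkAfter_succ π hk] at h ⊢
    rcases parkStep_eq_or_update (π := π) (parkAfter π k) ⟨k, hk⟩ with hs | ⟨t₀, hz, hpt, hocc, hs⟩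
    · rw [hs] at h ⊢; exact ih h
    rw [hs] at h ⊢
    by_cases ht : t = t₀
    · subst ht
      rw [Function.update_self] at h
      obtain rfl : j = ⟨k, hk⟩ := Fin.ext (Nat.succ_injective h).symm
      refine ⟨hpt, fun t' hpt' hlt => ?_⟩
      rw [Function.update_of_ne hlt.ne]
      exact ⟨Nat.pos_of_ne_zero (hocc t' hpt' hlt), parkAfter_le (by omega) t'⟩
    · rw [Function.update_of_ne ht] at h
      obtain ⟨hpj, hbefore⟩ := ih h
      refine ⟨hpj, fun t' hpt' hlt => ?_⟩
      obtain ⟨hpos, hle⟩ := hbefore t' hpt' hlt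
      have ht' : t' ≠ t₀ := by rintro rfl; omega
      rw [Function.update_of_ne ht']
      exact ⟨hpos, hle⟩

end Invariants

section Outcome

variable (σ : Equiv.Perm (Fin n))

theorem le_ell {i j : Fin n} (hji : j ≤ i) (hmax : ∀ t, j ≤ t → t ≤ i → σ t ≤ σ i) :
    i.val - j.val + 1 ≤ ell n σ i :=
  Finset.le_sup (f := fun j : Fin n => i.val - j.val + 1)
    (Finset.mem_filter.2 ⟨Finset.mem_univ _, hji, hmax⟩)

theorem ell_le_succ (i : Fin n) : ell n σ i ≤ i.val + 1 :=
  Finset.sup_le fun j _ => by omega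

variable {σ}

theorem apply_lt_apply_of_le_add_ell {i j : Fin n} (hji : j < i)
    (hell : i.val + 1 ≤ j.val + ell n σ i) : σ j < σ i := by
  obtain ⟨j₀, hj₀, hsup⟩ := Finset.exists_mem_eq_sup
    (Finset.univ.filter fun j : Fin n => j ≤ i ∧ ∀ t : Fin n, j ≤ t → t ≤ i → σ t ≤ σ i)
    ⟨i, Finset.mem_filter.2
      ⟨Finset.mem_univ _, le_rfl, fun t hit hti => by rw [le_antisymm hti hit]⟩⟩
    (fun j : Fin n => i.val - j.val + 1)
  simp only [Finset.mem_filter, Finset.mem_univ, true_and] at hj₀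
  have hj₀j : j₀ ≤ j := by
    rw [ell, hsup] at hell
    rw [Fin.le_def]
    have := Fin.le_def.1 hj₀.1
    omega
  exact (hj₀.2 j hj₀j hji.le).lt_of_ne (σ.injective.ne hji.ne)

variable {π : Fin n → ℕ}

theorem parkAfter_of_mem_Icc
    (H : ∀ i, π (σ i) ∈ Finset.Icc (i.val + 2 - ell n σ i) (i.val + 1))
    {k : ℕ} (hk : k ≤ n) (i : Fin n) :
    parkAfter π k (i.val + 1) = if (σ i).val < k then (σ i).val + 1 else 0 := by
  induction k generalizing i with
  | zero => simp [parkAfter_zero]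
  | succ k ih =>
    replace ih := ih (by omega)
    set i₀ := σ.symm ⟨k, hk⟩
    have hσi₀ : σ i₀ = ⟨k, hk⟩ := σ.apply_symm_apply _
    have hlo := (Finset.mem_Icc.1 (H i₀)).1
    have hhi := (Finset.mem_Icc.1 (H i₀)).2
    have hell := ell_le_succ σ i₀
    rw [hσi₀] at hlo hhi
    have hpark : parkAfter π (k + 1) = Function.update (parkAfter π k) (i₀.val + 1) (k + 1) := by
      rw [parkAfter_succ π hk]
      refine parkStep_eq_update (by simp [ih i₀, hσi₀]) hhi i₀.isLt fun t' hpt' hlt => ?_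
      let j' : Fin n := ⟨t' - 1, by omega⟩
      have ht' : t' = j'.val + 1 := by simp only [j']; omega
      have hlt' : σ j' < σ i₀ :=
        apply_lt_apply_of_le_add_ell (Fin.lt_def.2 (by simp only [j']; omega))
          (by simp only [j']; omega)
      rw [hσi₀, Fin.lt_def] at hlt'
      simp [ht', ih j', hlt']
    rw [hpark]
    by_cases hi : i = i₀
    · subst hi
      simp [hσi₀]
    · have hne : (σ i).val ≠ k := fun h => hi (σ.injective (hσi₀ ▸ Fin.ext h))
      rw [Function.update_of_ne (by simpa using Fin.val_ne_of_ne hi), ih i]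
      split_ifs <;> omega

theorem mem_Icc_of_outcomeMap (hpos : ∀ j, 1 ≤ π j)
    (hout : ∀ i : Fin n, outcomeMap n π (i.val + 1) = (σ i).val + 1) (i : Fin n) :
    π (σ i) ∈ Finset.Icc (i.val + 2 - ell n σ i) (i.val + 1) := by
  simp only [← parkAfter_self] at hout
  obtain ⟨hub, hocc⟩ := parkAfter_eq_succ le_rfl (hout i)
  have hp := hpos (σ i)
  let j₀ : Fin n := ⟨π (σ i) - 1, by omega⟩
  have hmax : ∀ t, j₀ ≤ t → t ≤ i → σ t ≤ σ i := by
    intro t hj₀t hti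
    rcases hti.lt_or_eq with hti | rfl
    · have := (hocc (t.val + 1) (by simp only [j₀, Fin.le_def] at hj₀t; omega)
        (by simpa using hti)).2
      rw [hout t] at this
      exact Fin.le_def.2 (by omega)
    · exact le_rfl
  have := le_ell σ (Fin.le_def.2 (by simp only [j₀]; omega)) hmax
  simp only [j₀] at this
  exact Finset.mem_Icc.2 ⟨by omega, hub⟩

theorem outcomeMap_eq_iff (hpos : ∀ j, 1 ≤ π j) :
    (∀ i : Fin n, outcomeMap n π (i.val + 1) = (σ i).val + 1) ↔
      ∀ i, π (σ i) ∈ Finset.Icc (i.val + 2 - ell n σ i) (i.val + 1) := by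
  refine ⟨mem_Icc_of_outcomeMap hpos, fun H i => ?_⟩
  simpa [← parkAfter_self] using parkAfter_of_mem_Icc H le_rfl i

theorem le_card_filter_apply_le (hπ : ∀ i : Fin n, π (σ i) ≤ i.val + 1) {k : ℕ} (hk : k ≤ n) :
    k ≤ (Finset.univ.filter fun j => π j ≤ k).card :=
  calc k = (Finset.univ.filter fun t : Fin n => t.val < k).card := by
        rw [Fin.card_filter_val_lt]; omega
    _ = ((Finset.univ.filter fun t : Fin n => t.val < k).image σ).card :=
        (Finset.card_image_of_injective _ σ.injective).symm
    _ ≤ _ := Finset.card_le_card fun x hx => by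
        obtain ⟨t, ht, rfl⟩ := Finset.mem_image.1 hx
        simp only [Finset.mem_filter, Finset.mem_univ, true_and] at ht ⊢
        exact (hπ t).trans (by omega)

end Outcome

section Restricted

variable (σ : Equiv.Perm (Fin n)) (s : ℕ)

def prefWindow (i : Fin n) : Finset ℕ :=
  Finset.Icc (i.val + 2 - ell n σ i) (min (i.val + 1) s)

theorem card_prefWindow (i : Fin n) :
    (prefWindow σ s i).card = ell n σ i - (i.val + 1 - s) := by
  have := ell_le_succ σ i
  rw [prefWindow, Nat.card_Icc]
  omega

variable {σ s}

theorem restricted_outcome_iff {π : Fin n → ℕ} :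
    ((∀ j, π j ∈ Finset.Icc 1 s) ∧
        (∀ i ∈ Finset.Icc 1 n, i ≤ (Finset.univ.filter (fun j => π j ≤ i)).card) ∧
        ∀ i : Fin n, outcomeMap n π (i.val + 1) = (σ i).val + 1) ↔
      ∀ i, π (σ i) ∈ prefWindow σ s i := by
  simp only [prefWindow, Finset.mem_Icc, le_min_iff]
  constructor
  · rintro ⟨hrange, -, hout⟩ i
    obtain ⟨hlo, hhi⟩ := Finset.mem_Icc.1 ((outcomeMap_eq_iff fun j => (hrange j).1).1 hout i)
    exact ⟨hlo, hhi, (hrange (σ i)).2⟩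
  · intro H
    have hpos (i : Fin n) : 1 ≤ π (σ i) := by
      have := ell_le_succ σ i
      have := (H i).1
      omega
    refine ⟨σ.forall_congr_right.1 fun i => ⟨hpos i, (H i).2.2⟩,
      fun k hk => le_card_filter_apply_le (fun i => (H i).2.1) hk.2,
      (outcomeMap_eq_iff (σ.forall_congr_right.1 hpos)).2 fun i =>
        Finset.mem_Icc.2 ⟨(H i).1, (H i).2.1⟩⟩

end Restricted

end Parking

open Parking in
theorem count_restricted_pf_with_outcome_general (n s : ℕ)
    (σ : Equiv.Perm (Fin n)) :
    {π : Fin n → ℕ |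
        (∀ j, π j ∈ Finset.Icc 1 s) ∧
        (∀ i ∈ Finset.Icc 1 n, i ≤ (Finset.univ.filter (fun j => π j ≤ i)).card) ∧
        ∀ i : Fin n, outcomeMap n π (i.val + 1) = (σ i).val + 1}.ncard =
      ∏ i : Fin n, (ell n σ i - ((i.val + 1) - s)) := by
  have hbox : {π : Fin n → ℕ |
        (∀ j, π j ∈ Finset.Icc 1 s) ∧
        (∀ i ∈ Finset.Icc 1 n, i ≤ (Finset.univ.filter (fun j => π j ≤ i)).card) ∧
        ∀ i : Fin n, outcomeMap n π (i.val + 1) = (σ i).val + 1} =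
      Fintype.piFinset fun j => prefWindow σ s (σ.symm j) := by
    ext π
    rw [Set.mem_ofPred_eq, restricted_outcome_iff, Finset.mem_coe, Fintype.mem_piFinset,
      σ.forall_congr_left]
    simp only [Equiv.apply_symm_apply]
  rw [hbox, Set.ncard_coe_finset, Fintype.card_piFinset, ← Equiv.prod_comp σ]
  simp only [Equiv.symm_apply_apply, card_prefWindow]

theorem count_restricted_pf_with_outcome (n s : ℕ) (h1 : 1 ≤ s) (h2 : s ≤ n)
    (σ : Equiv.Perm (Fin n)) :
    {π : Fin n → ℕ |
        (∀ j, π j ∈ Finset.Icc 1 s) ∧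
        (∀ i ∈ Finset.Icc 1 n, i ≤ (Finset.univ.filter (fun j => π j ≤ i)).card) ∧
        ∀ i : Fin n, outcomeMap n π (i.val + 1) = (σ i).val + 1}.ncard =
      ∏ i : Fin n, (ell n σ i - ((i.val + 1) - s)) :=
  count_restricted_pf_with_outcome_general n s σ
end

section
/- For any S⊆[n] with |S| = s, the map π ↦ f∘π, where f:[n]→[s] is defined by f(i) = |S∩[i]|, restricts to a bijection from S-restricted parking functions on n cars to u-parking functions with u_i = |S∩[i]|. -/
/-!
The map `f(x) = #{a ∈ S | a ≤ x}` is strictly increasing on `S` and maps `S` onto `[1, #S]`,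
so for `π` with values in `S` we have `f (π j) ≤ f i ↔ π j ≤ i`. Hence composing with `f`
preserves every counting condition `#{j | π j ≤ i}` defining the two kinds of parking functions,
and is injective on `S`-valued functions, and every `[1, #S]`-valued function lifts through `f`.
-/

open Finset

namespace Finset

variable {α : Type*} [LinearOrder α] (S : Finset α)

def rank (x : α) : ℕ := #(S.filter (· ≤ x))

variable {S}

theorem rank_mono : Monotone S.rank := fun _ _ hab =>
  card_le_card <| monotone_filter_right S fun _ _ hx => hx.trans hab

theorem rank_lt_rank {a b : α} (ha : a ∈ S) (hba : b < a) : S.rank b < S.rank a := by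
  refine card_lt_card ⟨monotone_filter_right S fun _ _ hx => hx.trans hba.le, fun hsub => ?_⟩
  have := (mem_filter.mp (hsub (mem_filter.mpr ⟨ha, le_rfl⟩))).2
  exact absurd hba (not_lt.mpr this)

theorem rank_le_rank_iff {a b : α} (ha : a ∈ S) : S.rank a ≤ S.rank b ↔ a ≤ b :=
  ⟨fun h => not_lt.mp fun hba => (rank_lt_rank ha hba).not_ge h, fun h => rank_mono h⟩

theorem rank_injOn : Set.InjOn S.rank S := fun _ ha _ hb h =>
  le_antisymm ((rank_le_rank_iff ha).mp h.le) ((rank_le_rank_iff hb).mp h.ge)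

theorem rank_mem_Icc {a : α} (ha : a ∈ S) : S.rank a ∈ Icc 1 #S :=
  mem_Icc.mpr ⟨card_pos.mpr ⟨a, mem_filter.mpr ⟨ha, le_rfl⟩⟩, card_filter_le _ _⟩

theorem image_rank : S.image S.rank = Icc 1 #S := by
  refine eq_of_subset_of_card_le (fun _ hx => ?_) ?_
  · obtain ⟨a, ha, rfl⟩ := mem_image.mp hx
    exact rank_mem_Icc ha
  · rw [Nat.card_Icc, card_image_of_injOn rank_injOn, Nat.add_sub_cancel]

theorem card_filter_rank_le_rank {ι : Type*} [Fintype ι] {π : ι → α} (hπ : ∀ j, π j ∈ S)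
    (i : α) : #(univ.filter fun j => S.rank (π j) ≤ S.rank i) = #(univ.filter fun j => π j ≤ i) :=
  congrArg card <| filter_congr fun j _ => rank_le_rank_iff (hπ j)

end Finset

theorem restricted_equiv_u_parking_general (n : ℕ) (S : Finset ℕ) :
    Set.BijOn (fun (π : Fin n → ℕ) => fun j => (S.filter (· ≤ π j)).card)
      {π : Fin n → ℕ |
        (∀ j, π j ∈ S) ∧
        ∀ i ∈ Finset.Icc 1 n, i ≤ (Finset.univ.filter (fun j => π j ≤ i)).card}
      {π : Fin n → ℕ |
        (∀ j, π j ∈ Finset.Icc 1 S.card) ∧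
        ∀ i ∈ Finset.Icc 1 n,
          i ≤ (Finset.univ.filter
                (fun j => π j ≤ (S.filter (· ≤ i)).card)).card} := by
  change Set.BijOn (fun π => S.rank ∘ π) _ {σ | (∀ j, σ j ∈ Icc 1 #S) ∧
    ∀ i ∈ Icc 1 n, i ≤ #(univ.filter fun j => σ j ≤ S.rank i)}
  refine ⟨?_, ?_, ?_⟩
  · rintro π ⟨hπS, hπ⟩
    refine ⟨fun j => rank_mem_Icc (hπS j), fun i hi => ?_⟩
    simpa only [Function.comp_apply, card_filter_rank_le_rank hπS] using hπ i hi
  · rintro π ⟨hπS, -⟩ π' ⟨hπ'S, -⟩ h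
    exact funext fun j => rank_injOn (hπS j) (hπ'S j) (congrFun h j)
  · rintro σ ⟨hσ, hσpark⟩
    have hlift : ∀ j, ∃ a ∈ S, S.rank a = σ j := fun j =>
      mem_image.mp ((image_rank (S := S)).symm ▸ hσ j)
    choose π hπS hπσ using hlift
    have hσπ : σ = S.rank ∘ π := funext fun j => (hπσ j).symm
    subst hσπ
    refine ⟨π, ⟨hπS, fun i hi => ?_⟩, rfl⟩
    simpa only [Function.comp_apply, card_filter_rank_le_rank hπS] using hσpark i hi

theorem restricted_equiv_u_parking (n : ℕ) (S : Finset ℕ)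
    (hS : S ⊆ Finset.Icc 1 n) :
    Set.BijOn (fun (π : Fin n → ℕ) => fun j => (S.filter (· ≤ π j)).card)
      {π : Fin n → ℕ |
        (∀ j, π j ∈ S) ∧
        ∀ i ∈ Finset.Icc 1 n, i ≤ (Finset.univ.filter (fun j => π j ≤ i)).card}
      {π : Fin n → ℕ |
        (∀ j, π j ∈ Finset.Icc 1 S.card) ∧
        ∀ i ∈ Finset.Icc 1 n,
          i ≤ (Finset.univ.filter
                (fun j => π j ≤ (S.filter (· ≤ i)).card)).card} :=
  restricted_equiv_u_parking_general n S
end
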